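/- arXiv:2411.13439 — 3 statements merged into one kernel-verified Lean document; each statement's English description precedes it below -/
import Mathlib

section
/- Let κ be a positive even integer and let G be a κ-connected finite simple graph with n vertices. Then the hyper-Wiener index satisfies WW(G) ≤ WW(C_n^{κ/2}), where C_n^{κ/2} is the (κ/2)-th power of the cycle on n vertices. -/
open Finset

/-- The distance between the two endpoints of an unordered pair of vertices. -/
noncomputable def pairDist {V : Type*} (G : SimpleGraph V) : Sym2 V → ℕ :=
  Sym2.lift ⟨G.dist, fun _ _ => SimpleGraph.dist_comm⟩

/-- The hyper-Wiener index: `(1/2) Σ (d(u,v)² + d(u,v))` over all unordered pairs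
of distinct vertices. -/
noncomputable def hyperWiener {V : Type*} [Fintype V] [DecidableEq V]
    (G : SimpleGraph V) : ℝ :=
  (1/2 : ℝ) * ∑ p ∈ Finset.univ.filter (fun p : Sym2 V => ¬ p.IsDiag),
    ((pairDist G p : ℝ)^2 + (pairDist G p : ℝ))

/-- The `k`-th power of a graph: two distinct vertices are adjacent iff their
distance is at most `k`. -/
def graphPow {V : Type*} (G : SimpleGraph V) (k : ℕ) : SimpleGraph V where
  Adj u v := u ≠ v ∧ G.dist u v ≤ k
  symm := by
    constructor
    rintro u v ⟨h1, h2⟩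
    exact ⟨h1.symm, by rwa [SimpleGraph.dist_comm]⟩
  loopless := by constructor; rintro v ⟨h, _⟩; exact h rfl

/-- `G` is `κ`-connected: it has more than `κ` vertices and deleting any set of
fewer than `κ` vertices leaves a connected graph. -/
def KConnected {V : Type*} [Fintype V] (G : SimpleGraph V) (κ : ℕ) : Prop :=
  κ < Fintype.card V ∧
    ∀ S : Finset V, S.card < κ → (G.induce ((↑S : Set V)ᶜ)).Connected

/-! ### Generic counting lemmas -/

/-- Layer-cake / telescoping decomposition of a sum. -/
lemma HW.layercake {V : Type*} [Fintype V] [DecidableEq V] (d : V → ℕ) (M : ℕ)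
    (hd : ∀ v, d v < M) (c : ℕ → ℝ) :
    ∑ v, ∑ j ∈ Finset.range (d v), c j
      = ∑ j ∈ Finset.range M, c j * ((Finset.univ.filter (fun v => j + 1 ≤ d v)).card : ℝ) := by
  have h1 : ∀ v, ∑ j ∈ Finset.range (d v), c j
      = ∑ j ∈ Finset.range M, if j + 1 ≤ d v then c j else 0 := by
    intro v
    rw [← Finset.sum_filter]
    congr 1
    ext j
    simp only [Finset.mem_range, Finset.mem_filter]
    have := hd v; omega
  simp_rw [h1]
  rw [Finset.sum_comm]
  refine Finset.sum_congr rfl fun j _ => ?_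
  rw [← Finset.sum_filter, Finset.sum_const, nsmul_eq_mul, mul_comm]

lemma HW.F_eq_sum (d : ℕ) : ((d : ℝ)^2 + d) = ∑ j ∈ Finset.range d, (2*(j:ℝ)+2) := by
  induction d with
  | zero => simp
  | succ m ih => rw [Finset.sum_range_succ, ← ih]; push_cast; ring

lemma HW.dist_lt_card {V : Type*} [Fintype V] [DecidableEq V] {G : SimpleGraph V}
    (hG : G.Connected) (u v : V) : G.dist u v < Fintype.card V := by
  obtain ⟨p⟩ := hG u v
  calc G.dist u v ≤ p.bypass.length := SimpleGraph.dist_le _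
    _ < Fintype.card V := p.bypass_isPath.length_lt

lemma HW.fiber_card {V : Type*} [Fintype V] [DecidableEq V] {b : Sym2 V} (hb : ¬ b.IsDiag) :
    (Finset.univ.filter (fun a : V × V => Function.uncurry Sym2.mk a = b)).card = 2 := by
  induction b with
  | _ u v =>
    have huv : u ≠ v := by simpa using hb
    have : Finset.univ.filter (fun a : V × V => Function.uncurry Sym2.mk a = s(u, v)) = {(u, v), (v, u)} := by
      ext ⟨a, b⟩
      simp only [Finset.mem_filter, Finset.mem_univ, true_and, Finset.mem_insert,
        Finset.mem_singleton, Function.uncurry_apply_pair, Sym2.eq, Sym2.rel_iff', Prod.mk.injEq, Prod.swap_prod_mk,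
        Prod.ext_iff]
    rw [this, Finset.card_pair (by simp [huv, Ne, Prod.ext_iff])]

lemma HW.sym2_sum_eq {V : Type*} [Fintype V] [DecidableEq V] (F : Sym2 V → ℝ)
    (h0 : ∀ v, F s(v, v) = 0) :
    2 * ∑ p ∈ Finset.univ.filter (fun p : Sym2 V => ¬ p.IsDiag), F p
      = ∑ u : V, ∑ v : V, F s(u, v) := by
  have key : ∑ x : V × V, F (Function.uncurry Sym2.mk x)
      = ∑ b ∈ (Finset.univ : Finset (V × V)).image (Function.uncurry Sym2.mk),
          ((Finset.univ.filter (fun a : V × V => Function.uncurry Sym2.mk a = b)).card : ℝ) * F b :=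
    Finset.sum_comp F (Function.uncurry Sym2.mk) |>.trans (by
      refine Finset.sum_congr rfl fun b _ => ?_
      rw [nsmul_eq_mul])
  have himg : (Finset.univ : Finset (V × V)).image (Function.uncurry Sym2.mk) = Finset.univ :=
    Finset.image_univ_of_surjective Sym2.mk_surjective
  rw [himg] at key
  have hsp : ∑ x : V × V, F (Function.uncurry Sym2.mk x) = ∑ u : V, ∑ v : V, F s(u, v) :=
    Fintype.sum_prod_type _
  rw [← hsp, key, ← Finset.sum_filter_add_sum_filter_not Finset.univ
    (fun p : Sym2 V => ¬ p.IsDiag)]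
  have hdiag : ∑ b ∈ Finset.univ.filter (fun p : Sym2 V => ¬¬ p.IsDiag),
      ((Finset.univ.filter (fun a : V × V => Function.uncurry Sym2.mk a = b)).card : ℝ) * F b = 0 := by
    refine Finset.sum_eq_zero fun b hb => ?_
    simp only [Finset.mem_filter, not_not] at hb
    obtain ⟨x, rfl⟩ : ∃ x, Sym2.diag x = b := ⟨_, Sym2.diag_diagElem hb.2⟩
    rw [Sym2.diag, h0, mul_zero]
  rw [hdiag, add_zero, Finset.mul_sum]
  refine Finset.sum_congr rfl fun b hb => ?_
  simp only [Finset.mem_filter] at hb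
  rw [HW.fiber_card hb.2]
  norm_num

/-! ### Power graphs -/

lemma HW.adj_dist_le_one {V : Type*} {G : SimpleGraph V} {u v : V} (h : G.Adj u v) :
    G.dist u v ≤ 1 := by
  have := SimpleGraph.dist_le h.toWalk
  simpa using this

lemma HW.le_graphPow {V : Type*} (G : SimpleGraph V) {k : ℕ} (hk : 1 ≤ k) :
    G ≤ graphPow G k := by
  intro u v h
  exact ⟨h.ne, le_trans (HW.adj_dist_le_one h) hk⟩

lemma HW.dist_le_pow_dist {V : Type*} {G : SimpleGraph V} (hG : G.Connected) (k : ℕ)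
    (hk : 1 ≤ k) (u v : V) : G.dist u v ≤ k * (graphPow G k).dist u v := by
  have hP : (graphPow G k).Connected := hG.mono (HW.le_graphPow G hk)
  obtain ⟨p, hp⟩ := (hP u v).exists_walk_length_eq_dist
  rw [← hp]
  clear hp
  induction p with
  | nil => simp
  | cons h p ih =>
    rename_i a b c
    calc G.dist a c ≤ G.dist a b + G.dist b c := hG.dist_triangle
      _ ≤ k + k * p.length := add_le_add h.2 ih
      _ = k * (SimpleGraph.Walk.cons h p).length := by
          rw [SimpleGraph.Walk.length_cons]; ring

/-! ### Cycle-side estimates -/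

open Fin.CommRing in
lemma HW.cycle_walk_offset {n : ℕ} [NeZero n] (hn : 3 ≤ n) {u v : Fin n}
    (p : (SimpleGraph.cycleGraph n).Walk u v) :
    ∃ j : ℤ, j.natAbs ≤ p.length ∧ v = u + (j : Fin n) := by
  induction p with
  | nil => exact ⟨0, by simp⟩
  | cons h p ih =>
    rename_i a b c
    obtain ⟨j, hj, hjv⟩ := ih
    have hstep : b = a + ((1 : ℤ) : Fin n) ∨ b = a + ((-1 : ℤ) : Fin n) := by
      rcases SimpleGraph.cycleGraph_adj'.mp h with h1 | h1
      · right
        have h2 : a - b = 1 := by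
          apply Fin.ext
          rw [h1, Fin.val_one']
          exact (Nat.mod_eq_of_lt (by omega)).symm
        push_cast
        linear_combination -h2
      · left
        have h2 : b - a = 1 := by
          apply Fin.ext
          rw [h1, Fin.val_one']
          exact (Nat.mod_eq_of_lt (by omega)).symm
        push_cast
        linear_combination h2
    rcases hstep with h2 | h2
    · refine ⟨1 + j, by simp [SimpleGraph.Walk.length_cons]; omega, ?_⟩
      rw [hjv, h2]
      push_cast
      ring
    · refine ⟨-1 + j, by simp [SimpleGraph.Walk.length_cons]; omega, ?_⟩
      rw [hjv, h2]
      push_cast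
      ring

open Fin.CommRing in
lemma HW.cycle_ball_card {n : ℕ} [NeZero n] (hn : 3 ≤ n)
    (hC : (SimpleGraph.cycleGraph n).Connected) (u : Fin n) (m : ℕ) :
    (Finset.univ.filter
      (fun v => v ≠ u ∧ (SimpleGraph.cycleGraph n).dist u v ≤ m)).card ≤ 2 * m := by
  classical
  set s := Finset.univ.filter
    (fun v => v ≠ u ∧ (SimpleGraph.cycleGraph n).dist u v ≤ m) with hs
  have hsub : insert u s
      ⊆ (Finset.Icc (-(m : ℤ)) m).image (fun j : ℤ => u + (j : Fin n)) := by
    intro v hv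
    rcases Finset.mem_insert.mp hv with rfl | hv
    · exact Finset.mem_image.mpr ⟨0, by rw [Finset.mem_Icc]; omega, by push_cast; ring⟩
    · rw [hs, Finset.mem_filter] at hv
      obtain ⟨_, hne, hdist⟩ := hv
      obtain ⟨p, hp⟩ := (hC u v).exists_walk_length_eq_dist
      obtain ⟨j, hjle, rfl⟩ := HW.cycle_walk_offset hn p
      refine Finset.mem_image.mpr ⟨j, ?_, rfl⟩
      rw [Finset.mem_Icc]
      rw [hp] at hjle
      omega
  have h1 : (insert u s).card ≤ 2 * m + 1 := by
    calc (insert u s).card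
        ≤ ((Finset.Icc (-(m : ℤ)) m).image (fun j : ℤ => u + (j : Fin n))).card :=
          Finset.card_le_card hsub
      _ ≤ (Finset.Icc (-(m : ℤ)) m).card := Finset.card_image_le
      _ = 2 * m + 1 := by rw [Int.card_Icc]; omega
  have h2 : s.card + 1 = (insert u s).card := by
    rw [Finset.card_insert_of_notMem]
    rw [hs]
    simp
  omega

lemma HW.tailP_bound {n k : ℕ} [NeZero n] (hn : 3 ≤ n) (hk : 1 ≤ k)
    (hC : (SimpleGraph.cycleGraph n).Connected) (u : Fin n) (i : ℕ) (hi : 1 ≤ i) :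
    n - 1 ≤ 2 * k * (i - 1) +
      (Finset.univ.filter
        (fun v => i ≤ (graphPow (SimpleGraph.cycleGraph n) k).dist u v)).card := by
  classical
  set T := Finset.univ.filter
    (fun v => i ≤ (graphPow (SimpleGraph.cycleGraph n) k).dist u v) with hT
  set Bf := Finset.univ.filter
    (fun v => v ≠ u ∧ (SimpleGraph.cycleGraph n).dist u v ≤ k * (i - 1)) with hBf
  have hsub : Finset.univ.erase u ⊆ Bf ∪ T := by
    intro v hv
    have hne : v ≠ u := (Finset.mem_erase.mp hv).1
    by_cases hd : i ≤ (graphPow (SimpleGraph.cycleGraph n) k).dist u v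
    · exact Finset.mem_union_right _ (by rw [hT, Finset.mem_filter]; exact ⟨Finset.mem_univ v, hd⟩)
    · refine Finset.mem_union_left _ ?_
      rw [hBf, Finset.mem_filter]
      refine ⟨Finset.mem_univ v, hne, ?_⟩
      calc (SimpleGraph.cycleGraph n).dist u v
          ≤ k * (graphPow (SimpleGraph.cycleGraph n) k).dist u v :=
            HW.dist_le_pow_dist hC k hk u v
        _ ≤ k * (i - 1) := Nat.mul_le_mul_left k (by omega)
  have hBfcard : Bf.card ≤ 2 * (k * (i - 1)) := HW.cycle_ball_card hn hC u (k * (i - 1))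
  have herase : (Finset.univ.erase u).card = n - 1 := by
    rw [Finset.card_erase_of_mem (Finset.mem_univ u)]
    simp
  calc n - 1 = (Finset.univ.erase u).card := herase.symm
    _ ≤ (Bf ∪ T).card := Finset.card_le_card hsub
    _ ≤ Bf.card + T.card := Finset.card_union_le _ _
    _ ≤ 2 * k * (i - 1) + T.card := by
        have : 2 * (k * (i - 1)) = 2 * k * (i - 1) := by ring
        omega

/-! ### G-side estimates -/

/-- A hom from an induced subgraph back to the graph. -/
def HW.valHom {V : Type*} {G : SimpleGraph V} (s : Set V) : G.induce s →g G where
  toFun := Subtype.val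
  map_rel' := fun {_ _} h => h

lemma HW.connected_of_kconnected {V : Type*} [Fintype V] [DecidableEq V] {G : SimpleGraph V}
    {κ : ℕ} (hκ : 0 < κ) (hG : KConnected G κ) : G.Connected := by
  have h := hG.2 ∅ (by simpa using hκ)
  have hs : ((↑(∅ : Finset V) : Set V)ᶜ) = Set.univ := by simp
  rw [hs] at h
  exact (SimpleGraph.induceUnivIso G).connected_iff.mp h

/-- Intermediate value along a walk for distances from a fixed vertex. -/
lemma HW.exists_dist_eq_on_walk {V : Type*} {G : SimpleGraph V} (hG : G.Connected) (u : V) :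
    ∀ {a b : V} (p : G.Walk a b) (j : ℕ), G.dist u a ≤ j → j ≤ G.dist u b →
    ∃ x ∈ p.support, G.dist u x = j := by
  intro a b p
  induction p with
  | nil => exact fun j h1 h2 => ⟨_, by simp, le_antisymm h1 h2⟩
  | cons h p ih =>
    rename_i a c b
    intro j h1 h2
    by_cases hc : G.dist u c ≤ j
    · obtain ⟨x, hx, hxd⟩ := ih j hc h2
      exact ⟨x, by simp [SimpleGraph.Walk.support_cons, hx], hxd⟩
    · have hadj : G.dist a c ≤ 1 := by
        have := SimpleGraph.dist_le h.toWalk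
        simpa using this
      have htri : G.dist u c ≤ G.dist u a + G.dist a c := hG.dist_triangle
      have : G.dist u a = j := by omega
      exact ⟨a, by simp, this⟩

/-- Each distance level of a κ-connected graph is large (as long as there is
something strictly beyond it). -/
lemma HW.level_card_ge {V : Type*} [Fintype V] [DecidableEq V] {G : SimpleGraph V} {κ : ℕ}
    (hκ : 0 < κ) (hG : KConnected G κ) (u w : V) (j : ℕ) (hj : 0 < j)
    (hw : j < G.dist u w) :
    κ ≤ (Finset.univ.filter (fun v => G.dist u v = j)).card := by
  have hconn : G.Connected := HW.connected_of_kconnected hκ hG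
  by_contra hlt
  push_neg at hlt
  set S := Finset.univ.filter (fun v => G.dist u v = j) with hS
  have hind := hG.2 S hlt
  have hu : u ∈ ((↑S : Set V)ᶜ) := by
    simp only [Set.mem_compl_iff, hS, Finset.coe_filter, Set.mem_setOf_eq]
    simp [SimpleGraph.dist_self]
    omega
  have hwmem : w ∈ ((↑S : Set V)ᶜ) := by
    simp only [Set.mem_compl_iff, hS, Finset.coe_filter, Set.mem_setOf_eq]
    simp only [Finset.mem_univ, true_and]
    omega
  obtain ⟨q⟩ := hind ⟨u, hu⟩ ⟨w, hwmem⟩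
  obtain ⟨x, hx, hxd⟩ := HW.exists_dist_eq_on_walk hconn u
    (q.map (HW.valHom ((↑S : Set V)ᶜ))) j
    (by show G.dist u u ≤ j; rw [SimpleGraph.dist_self]; omega) (le_of_lt hw)
  rw [SimpleGraph.Walk.support_map] at hx
  obtain ⟨y, hy, rfl⟩ := List.mem_map.mp hx
  have hyS : (y : V) ∈ ((↑S : Set V)ᶜ) := y.2
  rw [Set.mem_compl_iff] at hyS
  apply hyS
  simp only [hS, Finset.coe_filter, Set.mem_setOf_eq]
  exact ⟨Finset.mem_univ _, hxd⟩

lemma HW.tailG_bound {V : Type*} [Fintype V] [DecidableEq V] {G : SimpleGraph V} {κ : ℕ}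
    (hκ : 0 < κ) (hG : KConnected G κ) (u : V) (i : ℕ) (hi : 1 ≤ i)
    (hne : (Finset.univ.filter fun v => i ≤ G.dist u v).Nonempty) :
    κ * (i - 1) + (Finset.univ.filter fun v => i ≤ G.dist u v).card < Fintype.card V := by
  obtain ⟨w, hw⟩ := hne
  rw [Finset.mem_filter] at hw
  set A := (Finset.range (i - 1)).biUnion
    (fun j => Finset.univ.filter (fun v => G.dist u v = j + 1)) with hA
  set B := Finset.univ.filter (fun v => i ≤ G.dist u v) with hB
  have hdisj : ∀ x ∈ Finset.range (i - 1), ∀ y ∈ Finset.range (i - 1), x ≠ y →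
      Disjoint (Finset.univ.filter (fun v => G.dist u v = x + 1))
        (Finset.univ.filter (fun v => G.dist u v = y + 1)) := by
    intro x _ y _ hxy
    rw [Finset.disjoint_left]
    intro v hv hv'
    rw [Finset.mem_filter] at hv hv'
    omega
  have hAcard : κ * (i - 1) ≤ A.card := by
    rw [hA, Finset.card_biUnion hdisj]
    calc κ * (i - 1) = ∑ _j ∈ Finset.range (i - 1), κ := by
          rw [Finset.sum_const, Finset.card_range]; ring
      _ ≤ _ := by
          refine Finset.sum_le_sum fun j hj => ?_
          rw [Finset.mem_range] at hj
          exact HW.level_card_ge hκ hG u w (j + 1) (by omega) (by omega)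
  have hABdisj : Disjoint A B := by
    rw [Finset.disjoint_left]
    intro v hv hv'
    rw [hA, Finset.mem_biUnion] at hv
    obtain ⟨j, hj, hv⟩ := hv
    rw [Finset.mem_filter] at hv hv'
    rw [Finset.mem_range] at hj
    omega
  have hsub : A ∪ B ⊆ Finset.univ.erase u := by
    intro v hv
    rw [Finset.mem_union] at hv
    refine Finset.mem_erase.mpr ⟨?_, Finset.mem_univ v⟩
    rcases hv with hv | hv
    · rw [hA, Finset.mem_biUnion] at hv
      obtain ⟨j, _, hv⟩ := hv
      rw [Finset.mem_filter] at hv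
      rintro rfl
      rw [SimpleGraph.dist_self] at hv
      omega
    · rw [hB, Finset.mem_filter] at hv
      rintro rfl
      rw [SimpleGraph.dist_self] at hv
      omega
  have hcardpos : 0 < Fintype.card V := Fintype.card_pos_iff.mpr ⟨u⟩
  calc κ * (i - 1) + B.card ≤ A.card + B.card := by omega
    _ = (A ∪ B).card := (Finset.card_union_of_disjoint hABdisj).symm
    _ ≤ (Finset.univ.erase u).card := Finset.card_le_card hsub
    _ = Fintype.card V - 1 := by rw [Finset.card_erase_of_mem (Finset.mem_univ u)]; simp
    _ < Fintype.card V := by omega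

lemma HW.hyperWiener_eq {V : Type*} [Fintype V] [DecidableEq V] (G : SimpleGraph V) :
    hyperWiener G
      = (1/4 : ℝ) * ∑ u : V, ∑ v : V, ((G.dist u v : ℝ)^2 + G.dist u v) := by
  have h := HW.sym2_sum_eq (fun p => (pairDist G p : ℝ)^2 + pairDist G p)
    (fun v => by simp [pairDist, SimpleGraph.dist_self])
  have hpd : ∀ u v : V, pairDist G s(u, v) = G.dist u v := fun u v => rfl
  simp only [hpd] at h
  rw [hyperWiener]
  linarith [h]

/-- For even `κ > 0`, among `κ`-connected graphs with `n` vertices the `(κ/2)`-th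
power of the cycle `C_n` maximises the hyper-Wiener index. -/
theorem hyperWiener_le_hyperWiener_cyclePower {V : Type*} [Fintype V] [DecidableEq V]
    (κ : ℕ) (hκ : 0 < κ) (hκeven : Even κ)
    (G : SimpleGraph V) (hG : KConnected G κ)
    (n : ℕ) (hcard : Fintype.card V = n) :
    hyperWiener G ≤ hyperWiener (graphPow (SimpleGraph.cycleGraph n) (κ / 2)) := by
  classical
  obtain ⟨k, hk2⟩ := hκeven
  have hk : 1 ≤ k := by omega
  have hkdiv : κ / 2 = k := by omega
  rw [hkdiv]
  have hn3 : 3 ≤ n := by have := hG.1; omega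
  haveI : NeZero n := ⟨by omega⟩
  have hC : (SimpleGraph.cycleGraph n).Connected := by
    obtain ⟨m, hm⟩ : ∃ m, n = m + 1 := ⟨n - 1, by omega⟩
    have h := SimpleGraph.cycleGraph_connected (n := m)
    rw [← hm] at h
    exact h
  set P := graphPow (SimpleGraph.cycleGraph n) k with hP
  have hPconn : P.Connected := hC.mono (HW.le_graphPow _ hk)
  have hconn : G.Connected := HW.connected_of_kconnected (by omega) hG
  have htail : ∀ (u : V) (u' : Fin n) (j : ℕ),
      (Finset.univ.filter fun v => j + 1 ≤ G.dist u v).card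
        ≤ (Finset.univ.filter fun v => j + 1 ≤ P.dist u' v).card := by
    intro u u' j
    rcases (Finset.univ.filter fun v => j + 1 ≤ G.dist u v).eq_empty_or_nonempty with he | hne
    · rw [he]; simp
    · have h1 := HW.tailG_bound (show 0 < κ by omega) hG u (j + 1) (by omega) hne
      have h2 := HW.tailP_bound hn3 hk hC u' (j + 1) (by omega)
      rw [hcard] at h1
      simp only [Nat.add_sub_cancel] at h1 h2
      rw [← hP] at h2
      have hκk : 2 * k = κ := by omega
      rw [hκk] at h2
      omega
  have hsum : ∀ (u : V) (u' : Fin n),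
      ∑ v : V, ((G.dist u v : ℝ)^2 + G.dist u v)
        ≤ ∑ v : Fin n, ((P.dist u' v : ℝ)^2 + P.dist u' v) := by
    intro u u'
    have hdG : ∀ v, G.dist u v < n := by
      intro v; rw [← hcard]; exact HW.dist_lt_card hconn u v
    have hdP : ∀ v, P.dist u' v < n := by
      intro v
      have := HW.dist_lt_card hPconn u' v
      simpa using this
    calc ∑ v : V, ((G.dist u v : ℝ)^2 + G.dist u v)
        = ∑ v : V, ∑ jj ∈ Finset.range (G.dist u v), (2*(jj:ℝ)+2) :=
          Finset.sum_congr rfl fun v _ => HW.F_eq_sum _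
      _ = ∑ jj ∈ Finset.range n, (2*(jj:ℝ)+2) *
            ((Finset.univ.filter fun v => jj + 1 ≤ G.dist u v).card : ℝ) :=
          HW.layercake _ n hdG _
      _ ≤ ∑ jj ∈ Finset.range n, (2*(jj:ℝ)+2) *
            ((Finset.univ.filter fun v => jj + 1 ≤ P.dist u' v).card : ℝ) := by
          refine Finset.sum_le_sum fun jj _ => ?_
          have hpos : (0:ℝ) ≤ 2*(jj:ℝ)+2 := by positivity
          exact mul_le_mul_of_nonneg_left (by exact_mod_cast htail u u' jj) hpos
      _ = ∑ v : Fin n, ∑ jj ∈ Finset.range (P.dist u' v), (2*(jj:ℝ)+2) :=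
          (HW.layercake _ n hdP _).symm
      _ = ∑ v : Fin n, ((P.dist u' v : ℝ)^2 + P.dist u' v) :=
          Finset.sum_congr rfl fun v _ => (HW.F_eq_sum _).symm
  rw [HW.hyperWiener_eq G, HW.hyperWiener_eq P]
  have e : V ≃ Fin n := Fintype.equivFinOfCardEq hcard
  have hmain : ∑ u : V, ∑ v : V, ((G.dist u v : ℝ)^2 + G.dist u v)
      ≤ ∑ u' : Fin n, ∑ v : Fin n, ((P.dist u' v : ℝ)^2 + P.dist u' v) := by
    calc ∑ u : V, ∑ v : V, ((G.dist u v : ℝ)^2 + G.dist u v)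
        ≤ ∑ u : V, ∑ v : Fin n, ((P.dist (e u) v : ℝ)^2 + P.dist (e u) v) :=
          Finset.sum_le_sum fun u _ => hsum u (e u)
      _ = ∑ u' : Fin n, ∑ v : Fin n, ((P.dist u' v : ℝ)^2 + P.dist u' v) :=
          e.sum_comp (fun u' => ∑ v : Fin n, ((P.dist u' v : ℝ)^2 + P.dist u' v))
  linarith [hmain]
end

section
/- Let k, n be positive integers with k ≤ n−1 and let G be a k-tree with n vertices. Then for every nondecreasing function f : ℕ → ℝ, W_f(G) ≤ W_f(P_n^k), where P_n^k is the k-th power of the path on n vertices. -/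
open Finset

/-- The generalised Wiener index `W_f`: the sum of `f` of the distances over all
unordered pairs of distinct vertices. -/
noncomputable def wienerF {V : Type*} [Fintype V] [DecidableEq V]
    (G : SimpleGraph V) (f : ℕ → ℝ) : ℝ :=
  ∑ p ∈ Finset.univ.filter (fun p : Sym2 V => ¬ p.IsDiag), f (pairDist G p)

/-- `G` is a `k`-tree: there is a construction ordering of the vertices in which the
first `k+1` vertices form a clique (the starting `K_{k+1}`), and each later vertex is
joined to exactly the vertices of a `k`-clique among the earlier vertices. -/
def IsKTree {V : Type*} [Fintype V] [DecidableEq V] (G : SimpleGraph V) (k : ℕ) : Prop :=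
  k + 1 ≤ Fintype.card V ∧
  ∃ e : Fin (Fintype.card V) ≃ V,
    (∀ j : Fin (Fintype.card V), j.val ≤ k →
      ∀ i : Fin (Fintype.card V), i < j → G.Adj (e i) (e j)) ∧
    (∀ j : Fin (Fintype.card V), k + 1 ≤ j.val →
      ∃ C : Finset (Fin (Fintype.card V)), C.card = k ∧ (∀ i ∈ C, i < j) ∧
        G.IsClique (↑(C.image e) : Set V) ∧
        (∀ i : Fin (Fintype.card V), i < j → (G.Adj (e i) (e j) ↔ i ∈ C)))


section Aux
open SimpleGraph hiding ball
variable {k : ℕ}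

def cdiv (k d : ℕ) : ℕ := (d + k - 1) / k

lemma cdiv_zero (hk : 0 < k) : cdiv k 0 = 0 := by
  unfold cdiv
  rw [Nat.div_eq_of_lt] <;> omega

lemma le_cdiv_iff (hk : 0 < k) (t d : ℕ) : t + 1 ≤ cdiv k d ↔ t * k < d := by
  unfold cdiv
  rw [Nat.le_div_iff_mul_le hk, Nat.succ_mul]
  omega

lemma cdiv_le_iff (hk : 0 < k) (d L : ℕ) : cdiv k d ≤ L ↔ d ≤ L * k := by
  unfold cdiv
  rw [Nat.div_le_iff_le_mul_add_pred hk, Nat.mul_comm]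
  omega

lemma cdiv_pos (hk : 0 < k) {d : ℕ} (hd : 0 < d) : 1 ≤ cdiv k d := by
  have := (le_cdiv_iff hk 0 d).2 (by omega)
  omega

lemma cdiv_le_self (hk : 0 < k) (d : ℕ) : cdiv k d ≤ d := by
  rw [cdiv_le_iff hk]
  nlinarith

lemma cdiv_eq_one (hk : 0 < k) {d : ℕ} (h1 : 0 < d) (h2 : d ≤ k) : cdiv k d = 1 := by
  have := cdiv_pos hk h1
  have := (cdiv_le_iff hk d 1).2 (by omega)
  omega

lemma cdiv_succ_step (hk : 0 < k) {d : ℕ} (h : k < d) : cdiv k d = cdiv k (d - k) + 1 := by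
  unfold cdiv
  have h2 : d + k - 1 = (d - k + k - 1) + k := by omega
  rw [h2, Nat.add_div_right _ hk]

section Path
variable {n : ℕ}

lemma pathWalk (u v : Fin n) (d : ℕ) (h : v.val = u.val + d) :
    ∃ p : (SimpleGraph.pathGraph n).Walk u v, p.length = d := by
  induction d generalizing u with
  | zero =>
    have huv : u = v := Fin.ext (by omega)
    subst huv; exact ⟨SimpleGraph.Walk.nil, rfl⟩
  | succ d ih =>
    have hw : u.val + 1 < n := by omega
    set w : Fin n := ⟨u.val + 1, hw⟩ with hwdef
    have hadj : (SimpleGraph.pathGraph n).Adj u w := by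
      rw [SimpleGraph.pathGraph_adj]; left; rfl
    obtain ⟨p, hp⟩ := ih w (by simp [hwdef]; omega)
    exact ⟨SimpleGraph.Walk.cons hadj p, by simp [hp]⟩

lemma pathWalk_ge {u v : Fin n} (p : (SimpleGraph.pathGraph n).Walk u v) :
    Nat.dist u.val v.val ≤ p.length := by
  induction p with
  | nil => simp [Nat.dist_self]
  | cons h p ih =>
    rename_i a b c
    rw [SimpleGraph.pathGraph_adj] at h
    have h1 : Nat.dist a.val b.val = 1 := by
      rcases h with h | h
      · rw [Nat.dist_comm]; simp [Nat.dist, h.symm]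
      · simp [Nat.dist, h.symm]
    calc Nat.dist a.val c.val ≤ Nat.dist a.val b.val + Nat.dist b.val c.val :=
          Nat.dist.triangle_inequality _ _ _
      _ ≤ p.length + 1 := by omega
    
lemma pathGraph_dist_le {u v : Fin n} (h : u.val ≤ v.val) :
    (SimpleGraph.pathGraph n).dist u v ≤ Nat.dist u.val v.val := by
  obtain ⟨p, hp⟩ := pathWalk u v (v.val - u.val) (by omega)
  refine (SimpleGraph.dist_le p).trans ?_
  rw [hp, Nat.dist_eq_sub_of_le h]

lemma pathGraph_dist (u v : Fin n) :
    (SimpleGraph.pathGraph n).dist u v = Nat.dist u.val v.val := by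
  have key : ∀ a b : Fin n, a.val ≤ b.val →
      (SimpleGraph.pathGraph n).dist a b = Nat.dist a.val b.val := by
    intro a b hab
    refine le_antisymm (pathGraph_dist_le hab) ?_
    obtain ⟨p, hp⟩ := pathWalk a b (b.val - a.val) (by omega)
    obtain ⟨q, hq⟩ := (SimpleGraph.Reachable.exists_walk_length_eq_dist ⟨p⟩)
    rw [← hq]; exact pathWalk_ge q
  rcases le_total u.val v.val with h | h
  · exact key u v h
  · rw [SimpleGraph.dist_comm, Nat.dist_comm]; exact key v u h

lemma powPath_adj {u v : Fin n} :
    (graphPow (SimpleGraph.pathGraph n) k).Adj u v ↔ u ≠ v ∧ Nat.dist u.val v.val ≤ k := by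
  rw [show (graphPow (SimpleGraph.pathGraph n) k).Adj u v ↔
      (u ≠ v ∧ (SimpleGraph.pathGraph n).dist u v ≤ k) from Iff.rfl, pathGraph_dist]

lemma powWalk (hk : 0 < k) : ∀ d (u v : Fin n), u.val ≤ v.val → v.val - u.val = d →
    ∃ p : (graphPow (SimpleGraph.pathGraph n) k).Walk u v, p.length ≤ cdiv k d := by
  intro d
  induction d using Nat.strong_induction_on with
  | _ d ih =>
    intro u v huv hd
    rcases Nat.eq_zero_or_pos d with h0 | h0
    · have huv2 : u = v := Fin.ext (by omega)
      subst huv2; exact ⟨SimpleGraph.Walk.nil, by simp⟩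
    rcases le_or_gt d k with hdk | hdk
    · refine ⟨SimpleGraph.Walk.cons (powPath_adj.2 ⟨?_, ?_⟩) SimpleGraph.Walk.nil, ?_⟩
      · intro h; rw [h] at huv hd; omega
      · rw [Nat.dist_eq_sub_of_le huv]; omega
      · simp [cdiv_eq_one hk h0 hdk]
    · have hw : u.val + k < n := by have := v.isLt; omega
      set w : Fin n := ⟨u.val + k, hw⟩ with hwdef
      have hadj : (graphPow (SimpleGraph.pathGraph n) k).Adj u w := by
        refine powPath_adj.2 ⟨?_, ?_⟩
        · exact Fin.ne_of_val_ne (by show u.val ≠ u.val + k; omega)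
        · simp [hwdef, Nat.dist_eq_sub_of_le (by omega : u.val ≤ u.val + k)]
      obtain ⟨p, hp⟩ := ih (d - k) (by omega) w v (by show u.val + k ≤ v.val; omega) (by show v.val - (u.val + k) = d - k; omega)
      refine ⟨SimpleGraph.Walk.cons hadj p, ?_⟩
      rw [cdiv_succ_step hk hdk]
      simp; omega

lemma powWalk_ge {u v : Fin n} (p : (graphPow (SimpleGraph.pathGraph n) k).Walk u v) :
    Nat.dist u.val v.val ≤ k * p.length := by
  induction p with
  | nil => simp [Nat.dist_self]
  | cons h p ih =>
    rename_i a b c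
    rw [powPath_adj] at h
    calc Nat.dist a.val c.val ≤ Nat.dist a.val b.val + Nat.dist b.val c.val :=
          Nat.dist.triangle_inequality _ _ _
      _ ≤ k + k * p.length := by omega
      _ = k * (p.length + 1) := by ring
    
lemma powPath_dist (hk : 0 < k) (u v : Fin n) :
    (graphPow (SimpleGraph.pathGraph n) k).dist u v = cdiv k (Nat.dist u.val v.val) := by
  have key : ∀ a b : Fin n, a.val ≤ b.val →
      (graphPow (SimpleGraph.pathGraph n) k).dist a b = cdiv k (Nat.dist a.val b.val) := by
    intro a b hab
    obtain ⟨p, hp⟩ := powWalk hk (b.val - a.val) a b hab rfl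
    rw [Nat.dist_eq_sub_of_le hab]
    refine le_antisymm ((SimpleGraph.dist_le p).trans hp) ?_
    obtain ⟨q, hq⟩ := (SimpleGraph.Reachable.exists_walk_length_eq_dist ⟨p⟩)
    rw [cdiv_le_iff hk, ← hq, Nat.mul_comm]
    rw [← Nat.dist_eq_sub_of_le hab]
    exact powWalk_ge q
  rcases le_total u.val v.val with h | h
  · exact key u v h
  · rw [SimpleGraph.dist_comm, Nat.dist_comm]; exact key v u h

end Path

section Layer

lemma telescope (f : ℕ → ℝ) : ∀ m, 1 ≤ m → ∑ t ∈ Icc 2 m, (f t - f (t-1)) = f m - f 1 := by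
  intro m hm
  induction m, hm using Nat.le_induction with
  | base => norm_num
  | succ m hm ih =>
    rw [Finset.sum_Icc_succ_top (by omega), ih]
    norm_num

lemma layer {α : Type*} [DecidableEq α] (f : ℕ → ℝ) (S : Finset α) (g : α → ℕ) (N : ℕ)
    (h1 : ∀ a ∈ S, 1 ≤ g a) (h2 : ∀ a ∈ S, g a ≤ N) :
    ∑ a ∈ S, f (g a) = S.card * f 1 +
      ∑ t ∈ Icc 2 N, (f t - f (t-1)) * ((S.filter (fun a => t ≤ g a)).card) := by
  have point : ∀ a ∈ S, f (g a) = f 1 +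
      ∑ t ∈ Icc 2 N, (f t - f (t-1)) * (if t ≤ g a then (1:ℝ) else 0) := by
    intro a ha
    have : ∑ t ∈ Icc 2 N, (f t - f (t-1)) * (if t ≤ g a then (1:ℝ) else 0)
        = ∑ t ∈ (Icc 2 N).filter (fun t => t ≤ g a), (f t - f (t-1)) := by
      rw [Finset.sum_filter]
      apply Finset.sum_congr rfl
      intro t _
      split <;> simp
    rw [this]
    have hficc : (Icc 2 N).filter (fun t => t ≤ g a) = Icc 2 (g a) := by
      ext t
      simp only [Finset.mem_filter, Finset.mem_Icc]
      have := h2 a ha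
      omega
    rw [hficc]
    rcases Nat.lt_or_ge (g a) 2 with h | h
    · have : g a = 1 := by have := h1 a ha; omega
      rw [this]; simp
    · rw [telescope f (g a) (by omega)]; ring
  rw [Finset.sum_congr rfl point, Finset.sum_add_distrib]
  congr 1
  · rw [Finset.sum_const, nsmul_eq_mul]
  · rw [Finset.sum_comm]
    apply Finset.sum_congr rfl
    intro t _
    rw [← Finset.mul_sum]
    congr 1
    rw [Finset.sum_boole]

lemma layer_le {α β : Type*} [DecidableEq α] [DecidableEq β] (f : ℕ → ℝ) (hf : Monotone f)
    (S : Finset α) (S' : Finset β) (g : α → ℕ) (g' : β → ℕ) (N : ℕ)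
    (hcard : S.card = S'.card)
    (h1 : ∀ a ∈ S, 1 ≤ g a) (h2 : ∀ a ∈ S, g a ≤ N)
    (h1' : ∀ b ∈ S', 1 ≤ g' b) (h2' : ∀ b ∈ S', g' b ≤ N)
    (hcount : ∀ t, 2 ≤ t → t ≤ N →
      (S.filter (fun a => t ≤ g a)).card ≤ (S'.filter (fun b => t ≤ g' b)).card) :
    ∑ a ∈ S, f (g a) ≤ ∑ b ∈ S', f (g' b) := by
  rw [layer f S g N h1 h2, layer f S' g' N h1' h2', hcard]
  gcongr with t ht
  · simp only [Finset.mem_Icc] at ht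
    have := hf (by omega : t - 1 ≤ t)
    linarith
  · simp only [Finset.mem_Icc] at ht
    exact_mod_cast hcount t ht.1 ht.2

end Layer

section Ball

variable {V : Type*} [Fintype V] [DecidableEq V] (G : SimpleGraph V)

open scoped Classical in
noncomputable def ball (v : V) : ℕ → Finset V
  | 0 => {v}
  | t+1 => ball v t ∪ Finset.univ.filter (fun u => ∃ w ∈ ball v t, G.Adj w u)

variable {G}

lemma ball_subset_succ (v : V) (t : ℕ) : ball G v t ⊆ ball G v (t+1) := by
  rw [ball]; exact Finset.subset_union_left

lemma mem_ball_self (v : V) (t : ℕ) : v ∈ ball G v t := by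
  induction t with
  | zero => simp [ball]
  | succ t ih => exact ball_subset_succ v t ih

lemma mem_ball_iff_walk {v u : V} {t : ℕ} :
    u ∈ ball G v t ↔ ∃ p : G.Walk v u, p.length ≤ t := by
  induction t generalizing u with
  | zero =>
    simp only [ball, Finset.mem_singleton]
    constructor
    · rintro rfl; exact ⟨SimpleGraph.Walk.nil, by simp⟩
    · rintro ⟨p, hp⟩
      have := (SimpleGraph.Walk.eq_of_length_eq_zero (Nat.le_zero.1 hp)).symm
      exact this
  | succ t ih =>
    rw [ball]
    simp only [Finset.mem_union, Finset.mem_filter, Finset.mem_univ, true_and]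
    constructor
    · rintro (h | ⟨w, hw, hadj⟩)
      · obtain ⟨p, hp⟩ := ih.1 h
        exact ⟨p, by omega⟩
      · obtain ⟨p, hp⟩ := ih.1 hw
        exact ⟨p.concat hadj, by rw [SimpleGraph.Walk.length_concat]; omega⟩
    · rintro ⟨p, hp⟩
      rcases Nat.lt_or_ge p.length (t+1) with h | h
      · exact Or.inl (ih.2 ⟨p, by omega⟩)
      · right
        cases hq : p.reverse with
        | nil =>
          exfalso
          have := SimpleGraph.Walk.length_reverse p
          rw [hq] at this
          simp at this
          omega
        | cons hadj q =>
          refine ⟨_, ih.2 ⟨q.reverse, ?_⟩, hadj.symm⟩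
          have := SimpleGraph.Walk.length_reverse p
          rw [hq] at this
          simp only [SimpleGraph.Walk.length_cons] at this
          rw [SimpleGraph.Walk.length_reverse]
          omega

lemma mem_ball_of_dist_le {v u : V} {t : ℕ} (hr : G.Reachable v u) (h : G.dist v u ≤ t) :
    u ∈ ball G v t := by
  obtain ⟨p, hp⟩ := hr.exists_walk_length_eq_dist
  exact mem_ball_iff_walk.2 ⟨p, by omega⟩

lemma dist_le_of_mem_ball {v u : V} {t : ℕ} (h : u ∈ ball G v t) : G.dist v u ≤ t := by
  obtain ⟨p, hp⟩ := mem_ball_iff_walk.1 h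
  exact (SimpleGraph.dist_le p).trans hp

end Ball

section Grow

variable {V : Type*} [Fintype V] [DecidableEq V] {G : SimpleGraph V} {k : ℕ}

lemma ball_grow (hk : 0 < k) (hG : IsKTree G k) (v : V) (t : ℕ)
    (h : ball G v (t+1) ≠ Finset.univ) :
    (ball G v t).card + k ≤ (ball G v (t+1)).card := by
  obtain ⟨hkcard, e, hinit, hstep⟩ := hG
  have adj_init : ∀ i j : Fin (Fintype.card V), i.val ≤ k → j.val ≤ k → i ≠ j →
      G.Adj (e i) (e j) := by
    intro i j hi hj hij
    rcases lt_or_gt_of_ne hij with hlt | hgt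
    · exact hinit j hj i hlt
    · exact (hinit i hi j hgt).symm
  -- membership in ball (t+1) via a neighbour in ball t
  have mem_succ : ∀ u w : V, w ∈ ball G v t → G.Adj w u → u ∈ ball G v (t+1) := by
    intro u w hw hadj
    rw [ball]
    simp only [Finset.mem_union, Finset.mem_filter, Finset.mem_univ, true_and]
    exact Or.inr ⟨w, hw, hadj⟩
  -- it suffices to find k indices mapping into the boundary
  suffices hsuff : ∃ D : Finset (Fin (Fintype.card V)), k ≤ D.card ∧
      ∀ i ∈ D, e i ∈ ball G v (t+1) \ ball G v t by
    obtain ⟨D, hDcard, hD⟩ := hsuff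
    have himg : D.image e ⊆ ball G v (t+1) \ ball G v t := by
      intro x hx
      obtain ⟨i, hi, rfl⟩ := Finset.mem_image.1 hx
      exact hD i hi
    have hcard2 : k ≤ ((ball G v (t+1)) \ ball G v t).card := by
      calc k ≤ D.card := hDcard
        _ = (D.image e).card := (Finset.card_image_of_injective _ e.injective).symm
        _ ≤ _ := Finset.card_le_card himg
    have := Finset.card_sdiff_add_card_eq_card (ball_subset_succ (G := G) v t)
    omega
  -- R : still uncovered at time t+1
  have hR : ∃ r : Fin (Fintype.card V), e r ∉ ball G v (t+1) := by
    by_contra hc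
    push_neg at hc
    apply h
    apply Finset.eq_univ_of_forall
    intro x
    have := hc (e.symm x)
    simpa using this
  set Rind : Finset (Fin (Fintype.card V)) :=
    Finset.univ.filter (fun i => e i ∉ ball G v (t+1)) with hRind
  have hRne : Rind.Nonempty := by
    obtain ⟨r, hr⟩ := hR
    exact ⟨r, by simp [hRind, hr]⟩
  set m := Rind.min' hRne with hm
  have hmR : e m ∉ ball G v (t+1) := by
    have := Rind.min'_mem hRne
    simp [hRind] at this
    exact this
  have hmin : ∀ i : Fin (Fintype.card V), i < m → e i ∈ ball G v (t+1) := by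
    intro i hi
    by_contra hc
    have : m ≤ i := Rind.min'_le i (by simp [hRind, hc])
    exact absurd hi (not_lt.2 this)
  rcases Nat.lt_or_ge m.val (k+1) with hmk | hmk
  · -- case m.val ≤ k
    have hsmall : ∀ i : Fin (Fintype.card V), i.val ≤ k → e i ∉ ball G v t := by
      intro i hi hc
      have hne : i ≠ m := by
        rintro rfl
        exact hmR (ball_subset_succ v t hc)
      exact hmR (mem_succ _ _ hc (adj_init i m hi (by omega) hne))
    set Aind : Finset (Fin (Fintype.card V)) :=
      Finset.univ.filter (fun i => e i ∈ ball G v t) with hAind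
    have hAne : Aind.Nonempty := ⟨e.symm v, by simpa [hAind] using mem_ball_self (G := G) v t⟩
    set a := Aind.min' hAne with ha
    have haA : e a ∈ ball G v t := by
      have := Aind.min'_mem hAne
      simpa [hAind] using this
    have hak : k + 1 ≤ a.val := by
      by_contra hc
      exact hsmall a (by omega) haA
    obtain ⟨C, hCcard, hClt, _, hCiff⟩ := hstep a hak
    refine ⟨C, by omega, fun i hi => ?_⟩
    have hilt := hClt i hi
    have hadj : G.Adj (e i) (e a) := (hCiff i hilt).2 hi
    have hmem : e i ∈ ball G v (t+1) := mem_succ _ _ haA hadj.symm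
    have hnot : e i ∉ ball G v t := by
      intro hc
      have : a ≤ i := Aind.min'_le i (by simp [hAind, hc])
      exact absurd hilt (not_lt.2 this)
    exact Finset.mem_sdiff.2 ⟨hmem, hnot⟩
  · -- case k+1 ≤ m.val
    obtain ⟨C, hCcard, hClt, _, hCiff⟩ := hstep m hmk
    refine ⟨C, by omega, fun i hi => ?_⟩
    have hilt := hClt i hi
    have hmem : e i ∈ ball G v (t+1) := hmin i hilt
    have hnot : e i ∉ ball G v t := by
      intro hc
      exact hmR (mem_succ _ _ hc ((hCiff i hilt).2 hi))
    exact Finset.mem_sdiff.2 ⟨hmem, hnot⟩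

lemma ball_card (hk : 0 < k) (hG : IsKTree G k) (v : V) (t : ℕ)
    (h : ball G v t ≠ Finset.univ) : 1 + t * k ≤ (ball G v t).card := by
  induction t with
  | zero => simp [ball]
  | succ t ih =>
    have hprev : ball G v t ≠ Finset.univ := by
      intro hc
      apply h
      have := ball_subset_succ (G := G) v t
      rw [hc] at this
      exact Finset.eq_univ_of_forall fun x => this (Finset.mem_univ x)
    have := ball_grow hk hG v t h
    have := ih hprev
    have : 1 + t * k + k ≤ (ball G v (t+1)).card := by omega
    calc 1 + (t+1) * k = 1 + t * k + k := by ring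
      _ ≤ _ := this

lemma ktree_ball_univ (hk : 0 < k) (hG : IsKTree G k) (v : V) :
    ball G v (Fintype.card V) = Finset.univ := by
  by_contra hc
  have h1 := ball_card hk hG v (Fintype.card V) hc
  have h2 : (ball G v (Fintype.card V)).card ≤ Fintype.card V := by
    simpa using Finset.card_le_card (Finset.subset_univ (ball G v (Fintype.card V)))
  nlinarith

lemma ktree_connected (hk : 0 < k) (hG : IsKTree G k) : G.Connected := by
  have hne : Nonempty V := by
    have := hG.1
    have : 0 < Fintype.card V := by omega
    exact Fintype.card_pos_iff.1 this
  refine ⟨fun u v => ?_⟩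
  have := ktree_ball_univ hk hG u (V := V)
  have hv : v ∈ ball G u (Fintype.card V) := this ▸ Finset.mem_univ v
  obtain ⟨p, _⟩ := mem_ball_iff_walk.1 hv
  exact ⟨p⟩

lemma ktree_count (hk : 0 < k) (hG : IsKTree G k) (v : V) (t : ℕ) (ht : 1 ≤ t) :
    (Finset.univ.filter (fun u => t ≤ G.dist v u)).card ≤ Fintype.card V - 1 - (t-1) * k := by
  set S := Finset.univ.filter (fun u => t ≤ G.dist v u) with hS
  rcases S.eq_empty_or_nonempty with he | hne
  · simp [he]
  obtain ⟨u, hu⟩ := hne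
  simp only [hS, Finset.mem_filter] at hu
  have hconn := ktree_connected hk hG
  have hnb : ball G v (t-1) ≠ Finset.univ := by
    intro hc
    have : u ∈ ball G v (t-1) := hc ▸ Finset.mem_univ u
    have := dist_le_of_mem_ball this
    omega
  have hcard := ball_card hk hG v (t-1) hnb
  have hdisj : Disjoint S (ball G v (t-1)) := by
    rw [Finset.disjoint_left]
    intro x hx hxb
    simp only [hS, Finset.mem_filter] at hx
    have := dist_le_of_mem_ball hxb
    omega
  have : S.card + (ball G v (t-1)).card ≤ Fintype.card V := by
    rw [← Finset.card_union_of_disjoint hdisj]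
    simpa using Finset.card_le_card (Finset.subset_univ _)
  omega

lemma ktree_dist_le (hk : 0 < k) (hG : IsKTree G k) (u v : V) :
    G.dist u v ≤ Fintype.card V - 1 := by
  have hcV : k + 1 ≤ Fintype.card V := hG.1
  have huniv : ball G u (Fintype.card V - 1) = Finset.univ := by
    by_contra hne
    have h1 := ball_card hk hG u (Fintype.card V - 1) hne
    have h2 : (ball G u (Fintype.card V - 1)).card < Fintype.card V := by
      have := Finset.card_lt_card ((Finset.subset_univ _).ssubset_of_ne hne)
      simpa using this
    have h3 : Fintype.card V - 1 ≤ (Fintype.card V - 1) * k :=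
      Nat.le_mul_of_pos_right _ hk
    omega
  have : v ∈ ball G u (Fintype.card V - 1) := huniv ▸ Finset.mem_univ v
  exact dist_le_of_mem_ball this

end Grow

section Transmission

variable {V : Type*} [Fintype V] [DecidableEq V] {G : SimpleGraph V} {k : ℕ}

lemma ktree_transmission (hk : 0 < k) (hG : IsKTree G k) (f : ℕ → ℝ) (hf : Monotone f) (v : V) :
    ∑ u ∈ Finset.univ.erase v, f (G.dist v u) ≤
      ∑ d ∈ Finset.Icc 1 (Fintype.card V - 1), f (cdiv k d) := by
  have hconn := ktree_connected hk hG
  have hcV := hG.1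
  apply layer_le f hf _ _ _ _ (Fintype.card V - 1)
  · rw [Finset.card_erase_of_mem (Finset.mem_univ v), Nat.card_Icc]
    simp
  · intro u hu
    have hne : u ≠ v := Finset.ne_of_mem_erase hu
    exact hconn.pos_dist_of_ne (Ne.symm hne)
  · intro u _
    exact ktree_dist_le hk hG v u
  · intro d hd
    simp only [Finset.mem_Icc] at hd
    exact cdiv_pos hk hd.1
  · intro d hd
    simp only [Finset.mem_Icc] at hd
    exact (cdiv_le_self hk d).trans hd.2
  · intro t ht2 htN
    have h1 : ((Finset.univ.erase v).filter (fun u => t ≤ G.dist v u)).card ≤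
        (Finset.univ.filter (fun u => t ≤ G.dist v u)).card :=
      Finset.card_le_card (Finset.filter_subset_filter _ (Finset.erase_subset _ _))
    have h2 := ktree_count hk hG v t (by omega)
    have h3 : (Finset.Icc 1 (Fintype.card V - 1)).filter (fun d => t ≤ cdiv k d) =
        Finset.Icc ((t-1)*k + 1) (Fintype.card V - 1) := by
      ext d
      simp only [Finset.mem_filter, Finset.mem_Icc]
      have hiff : t ≤ cdiv k d ↔ (t-1) * k < d := by
        have := le_cdiv_iff hk (t-1) d
        rw [show t - 1 + 1 = t from by omega] at this
        exact this
      rw [hiff]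
      omega
    rw [h3, Nat.card_Icc]
    omega

end Transmission

section Sym2Sum

variable {V : Type*} [Fintype V] [DecidableEq V]

lemma sum_offDiag_sym2 (F : Sym2 V → ℝ) :
    ∑ x ∈ (Finset.univ : Finset V).offDiag, F (Sym2.mk.uncurry x) =
      2 * ∑ p ∈ Finset.univ.filter (fun p : Sym2 V => ¬ p.IsDiag), F p := by
  rw [Finset.sum_comp]
  have himg : (Finset.univ : Finset V).offDiag.image Sym2.mk.uncurry =
      Finset.univ.filter (fun p : Sym2 V => ¬ p.IsDiag) := by
    ext p
    induction p with
    | _ u v =>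
      simp only [Finset.mem_image, Finset.mem_filter, Finset.mem_univ, true_and,
        Finset.mem_offDiag, Sym2.isDiag_iff_proj_eq]
      constructor
      · rintro ⟨⟨a, b⟩, hmem, hmk⟩
        have hab : a ≠ b := hmem
        rw [Function.uncurry_apply_pair, Sym2.eq_iff] at hmk
        rcases hmk with ⟨rfl, rfl⟩ | ⟨rfl, rfl⟩
        · exact hab
        · exact hab.symm
      · intro h
        exact ⟨(u, v), h, rfl⟩
  rw [himg, Finset.mul_sum]
  apply Finset.sum_congr rfl
  intro p hp
  induction p with
  | _ u v =>
    simp only [Finset.mem_filter, Sym2.isDiag_iff_proj_eq] at hp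
    have huv : u ≠ v := hp.2
    have hfib : ((Finset.univ : Finset V).offDiag.filter (fun x => Sym2.mk.uncurry x = s(u, v))) =
        {(u, v), (v, u)} := by
      ext ⟨a, b⟩
      simp only [Finset.mem_filter, Finset.mem_offDiag, Finset.mem_univ, true_and,
        Finset.mem_insert, Finset.mem_singleton, Sym2.eq_iff, Prod.mk.injEq]
      aesop
    rw [hfib]
    rw [Finset.card_insert_of_notMem (by simp [Prod.ext_iff]; intro h; exact absurd h huv),
      Finset.card_singleton]
    rw [nsmul_eq_mul]
    norm_num

end Sym2Sum

section Delete

variable {V : Type*} [Fintype V] [DecidableEq V] {G : SimpleGraph V} {k : ℕ}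

lemma card_ne_aux (z : V) : Fintype.card {x : V // x ≠ z} = Fintype.card V - 1 := by
  have : Fintype.card {x : V // x = z} = 1 := Fintype.card_subtype_eq z
  have h := Fintype.card_subtype_compl (fun x : V => x = z)
  simpa [this] using h

lemma ktree_delete (hk : 0 < k) (hG : IsKTree G k) (h2 : k + 2 ≤ Fintype.card V) :
    ∃ z : V, IsKTree (G.comap (Subtype.val : {x : V // x ≠ z} → V)) k := by
  obtain ⟨hkc, e, hinit, hstep⟩ := hG
  set z : V := e ⟨Fintype.card V - 1, by omega⟩ with hz
  refine ⟨z, ?_⟩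
  set N := Fintype.card {x : V // x ≠ z} with hNdef
  have hN : N = Fintype.card V - 1 := card_ne_aux z
  have hNk : k + 1 ≤ N := by omega
  have hNpos : 0 < N := by omega
  set emb : Fin N → Fin (Fintype.card V) := fun i => ⟨i.val, by omega⟩ with hemb
  have htoFun : ∀ i : Fin N, e (emb i) ≠ z := by
    intro i h
    rw [hz] at h
    have := e.injective h
    have : i.val = Fintype.card V - 1 := congrArg Fin.val this
    omega
  set toFun : Fin N → {x : V // x ≠ z} := fun i => ⟨e (emb i), htoFun i⟩ with htf
  have hinj : Function.Injective toFun := by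
    intro i1 i2 h
    have : e (emb i1) = e (emb i2) := congrArg Subtype.val h
    have := congrArg Fin.val (e.injective this)
    exact Fin.ext this
  have hbij : Function.Bijective toFun :=
    (Fintype.bijective_iff_injective_and_card toFun).2 ⟨hinj, by simp [hNdef]⟩
  set e' : Fin N ≃ {x : V // x ≠ z} := Equiv.ofBijective toFun hbij with he'
  have he'app : ∀ i, e' i = toFun i := fun i => rfl
  have hval : ∀ i, (e' i).val = e (emb i) := fun i => rfl
  refine ⟨by rw [← hNdef]; exact hNk, e', ?_, ?_⟩
  · intro j hj i hij
    rw [SimpleGraph.comap_adj, hval, hval]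
    exact hinit (emb j) hj (emb i) hij
  · intro j hj
    obtain ⟨C, hCcard, hClt, hCclique, hCiff⟩ := hstep (emb j) hj
    have hvlt : ∀ i ∈ C, i.val < j.val := fun i hi => hClt i hi
    set g : Fin (Fintype.card V) → Fin N :=
      fun i => if h : i.val < N then ⟨i.val, h⟩ else ⟨0, hNpos⟩ with hg
    have hgC : ∀ i ∈ C, (g i).val = i.val := by
      intro i hi
      have h1 : i.val < N := lt_trans (hvlt i hi) j.isLt
      simp [hg, h1]
    set C' := C.image g with hC'
    have hC'card : C'.card = k := by
      rw [hC', Finset.card_image_of_injOn, hCcard]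
      intro i1 h1 i2 h2 hgeq
      have := congrArg Fin.val hgeq
      rw [hgC i1 h1, hgC i2 h2] at this
      exact Fin.ext this
    have hC'lt : ∀ i ∈ C', i < j := by
      intro i hi
      obtain ⟨i0, hi0, rfl⟩ := Finset.mem_image.1 hi
      rw [Fin.lt_def, hgC i0 hi0]
      exact hvlt i0 hi0
    have hmemiff : ∀ i : Fin N, i < j → ((emb i) ∈ C ↔ i ∈ C') := by
      intro i hij
      constructor
      · intro h
        have : g (emb i) = i := by
          apply Fin.ext
          rw [hgC _ h]
        rw [← this]
        exact Finset.mem_image_of_mem g h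
      · intro h
        obtain ⟨i0, hi0, heq⟩ := Finset.mem_image.1 h
        have : (emb i).val = i0.val := by
          have := congrArg Fin.val heq
          rw [hgC i0 hi0] at this
          exact this.symm
        rw [show emb i = i0 from Fin.ext this]
        exact hi0
    have hembC : ∀ i ∈ C, emb (g i) = i := by
      intro i hi
      apply Fin.ext
      show (emb (g i)).val = i.val
      have h1 : i.val < N := lt_trans (hvlt i hi) j.isLt
      simp [hemb, hg, h1]
    refine ⟨C', hC'card, hC'lt, ?_, ?_⟩
    · intro x hx y hy hxy
      simp only [Finset.coe_image, Set.mem_image, Finset.mem_coe] at hx hy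
      obtain ⟨i1, hi1, rfl⟩ := hx
      obtain ⟨i2, hi2, rfl⟩ := hy
      obtain ⟨i01, hi01, rfl⟩ := Finset.mem_image.1 hi1
      obtain ⟨i02, hi02, rfl⟩ := Finset.mem_image.1 hi2
      rw [SimpleGraph.comap_adj]
      have hx1 : (e' (g i01)).val = e i01 := by rw [hval, hembC i01 hi01]
      have hx2 : (e' (g i02)).val = e i02 := by rw [hval, hembC i02 hi02]
      rw [hx1, hx2]
      apply hCclique
      · simp only [Finset.coe_image, Set.mem_image, Finset.mem_coe]
        exact ⟨i01, hi01, rfl⟩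
      · simp only [Finset.coe_image, Set.mem_image, Finset.mem_coe]
        exact ⟨i02, hi02, rfl⟩
      · intro h
        apply hxy
        apply Subtype.ext
        rw [hx1, hx2, h]
    · intro i hij
      rw [SimpleGraph.comap_adj, hval, hval, ← hmemiff i hij]
      exact hCiff (emb i) hij

lemma comap_dist_le {z : V}
    (hconn' : (G.comap (Subtype.val : {x : V // x ≠ z} → V)).Connected)
    (a b : {x : V // x ≠ z}) :
    G.dist a.val b.val ≤ (G.comap (Subtype.val : {x : V // x ≠ z} → V)).dist a b := by
  obtain ⟨p, hp⟩ := hconn'.exists_walk_length_eq_dist a b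
  have := SimpleGraph.dist_le (p.map (SimpleGraph.Hom.comap Subtype.val G))
  rwa [SimpleGraph.Walk.length_map, hp] at this

end Delete

section PathT

noncomputable def pathT (f : ℕ → ℝ) (k m : ℕ) : ℝ :=
  ∑ i : Fin m, ∑ j : Fin m, f (cdiv k (Nat.dist i.val j.val))

lemma row_sum (f : ℕ → ℝ) (k m : ℕ) :
    ∑ i : Fin m, f (cdiv k (Nat.dist i.val m)) = ∑ d ∈ Finset.Icc 1 m, f (cdiv k d) := by
  rcases Nat.eq_zero_or_pos m with rfl | hm
  · simp
  apply Finset.sum_nbij' (i := fun (i : Fin m) => m - i.val)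
    (j := fun (d : ℕ) => (⟨m - max d 1, by omega⟩ : Fin m))
  · intro i _
    simp only [Finset.mem_Icc]
    have := i.isLt
    omega
  · intro d _
    exact Finset.mem_univ _
  · intro i _
    apply Fin.ext
    show m - max (m - i.val) 1 = i.val
    have := i.isLt
    omega
  · intro d hd
    simp only [Finset.mem_Icc] at hd
    show m - (m - max d 1) = d
    omega
  · intro i _
    congr 1
    rw [Nat.dist_eq_sub_of_le (le_of_lt i.isLt)]

lemma pathT_succ (f : ℕ → ℝ) {k : ℕ} (hk : 0 < k) (m : ℕ) :
    pathT f k (m+1) = pathT f k m + 2 * (∑ d ∈ Finset.Icc 1 m, f (cdiv k d)) + f 0 := by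
  unfold pathT
  rw [Fin.sum_univ_castSucc]
  have hinner : ∀ i : Fin (m+1), ∑ j : Fin (m+1), f (cdiv k (Nat.dist i.val j.val))
      = ∑ j : Fin m, f (cdiv k (Nat.dist i.val j.val)) + f (cdiv k (Nat.dist i.val m)) := by
    intro i
    rw [Fin.sum_univ_castSucc]
    simp [Fin.coe_castSucc, Fin.val_last]
  rw [Finset.sum_congr rfl (fun i _ => hinner (Fin.castSucc i))]
  rw [hinner (Fin.last m)]
  rw [Finset.sum_add_distrib]
  simp only [Fin.coe_castSucc, Fin.val_last]
  rw [Nat.dist_self, cdiv_zero hk]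
  have hrow2 : ∑ j : Fin m, f (cdiv k (Nat.dist m j.val)) =
      ∑ d ∈ Finset.Icc 1 m, f (cdiv k d) := by
    rw [← row_sum f k m]
    apply Finset.sum_congr rfl
    intro j _
    rw [Nat.dist_comm]
  rw [hrow2, row_sum f k m]
  ring

end PathT

section Base

variable {V : Type*} [Fintype V] [DecidableEq V] {G : SimpleGraph V} {k : ℕ}

lemma base_case (f : ℕ → ℝ) (hk : 0 < k) (hG : IsKTree G k)
    (hcard : Fintype.card V = k + 1) :
    ∑ u : V, ∑ v : V, f (G.dist u v) = pathT f k (Fintype.card V) := by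
  obtain ⟨hkc, e, hinit, _⟩ := hG
  have hcomp : ∀ i j : Fin (Fintype.card V), i ≠ j → G.Adj (e i) (e j) := by
    intro i j hij
    have hi : i.val ≤ k := by have := i.isLt; omega
    have hj : j.val ≤ k := by have := j.isLt; omega
    rcases lt_or_gt_of_ne hij with h | h
    · exact (hinit j hj i h).symm.symm
    · exact (hinit i hi j h).symm
  unfold pathT
  rw [← Equiv.sum_comp e (fun u => ∑ v : V, f (G.dist u v))]
  apply Finset.sum_congr rfl
  intro i _
  rw [← Equiv.sum_comp e (fun v => f (G.dist (e i) v))]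
  apply Finset.sum_congr rfl
  intro j _
  rcases eq_or_ne i j with rfl | hij
  · rw [SimpleGraph.dist_self, Nat.dist_self, cdiv_zero hk]
  · have hadj := hcomp i j hij
    rw [SimpleGraph.dist_eq_one_iff_adj.2 hadj]
    have hne : i.val ≠ j.val := fun h => hij (Fin.ext h)
    have hdpos : 0 < Nat.dist i.val j.val := Nat.dist_pos_of_ne hne
    have hdle : Nat.dist i.val j.val ≤ k := by
      have hi := i.isLt
      have hj := j.isLt
      rw [Nat.dist]
      omega
    rw [cdiv_eq_one hk hdpos hdle]

end Base

lemma main_aux (f : ℕ → ℝ) (hf : Monotone f) {k : ℕ} (hk : 0 < k) :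
    ∀ (n : ℕ) (V : Type*) [Fintype V] [DecidableEq V] (G : SimpleGraph V),
      Fintype.card V = n → IsKTree G k →
      (∑ u : V, ∑ v : V, f (G.dist u v)) ≤ pathT f k n := by
  intro n
  induction n using Nat.strong_induction_on with
  | _ n ih =>
    intro V _ _ G hcard hG
    subst hcard
    have hkc := hG.1
    rcases Nat.lt_or_ge (Fintype.card V) (k+2) with hb | h2
    · have hbase : Fintype.card V = k + 1 := by omega
      exact le_of_eq (base_case f hk hG hbase)
    · obtain ⟨z, hG'⟩ := ktree_delete hk hG h2
      have hcard' : Fintype.card {x : V // x ≠ z} = Fintype.card V - 1 := card_ne_aux z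
      have hconn' := ktree_connected hk hG'
      have hconn := ktree_connected hk hG
      have IH := ih (Fintype.card V - 1) (by omega) {x : V // x ≠ z}
        (G.comap (Subtype.val : {x : V // x ≠ z} → V)) hcard' hG'
      have hmem : ∀ x : V, x ∈ Finset.univ.erase z ↔ x ≠ z := by
        intro x
        simp [Finset.mem_erase]
      have hsplit : (∑ u : V, ∑ v : V, f (G.dist u v)) =
          (∑ u ∈ Finset.univ.erase z, ∑ v ∈ Finset.univ.erase z, f (G.dist u v))
          + ((∑ v ∈ Finset.univ.erase z, f (G.dist z v))
          + (∑ u ∈ Finset.univ.erase z, f (G.dist u z)) + f 0) := by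
        have h1 : ∀ u : V, ∑ v : V, f (G.dist u v)
            = ∑ v ∈ Finset.univ.erase z, f (G.dist u v) + f (G.dist u z) := by
          intro u
          exact (Finset.sum_erase_add _ _ (Finset.mem_univ z)).symm
        calc ∑ u : V, ∑ v : V, f (G.dist u v)
            = ∑ u : V, (∑ v ∈ Finset.univ.erase z, f (G.dist u v) + f (G.dist u z)) :=
              Finset.sum_congr rfl (fun u _ => h1 u)
          _ = (∑ u : V, ∑ v ∈ Finset.univ.erase z, f (G.dist u v))
              + ∑ u : V, f (G.dist u z) := Finset.sum_add_distrib
          _ = ((∑ u ∈ Finset.univ.erase z, ∑ v ∈ Finset.univ.erase z, f (G.dist u v))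
                + ∑ v ∈ Finset.univ.erase z, f (G.dist z v))
              + ((∑ u ∈ Finset.univ.erase z, f (G.dist u z)) + f (G.dist z z)) := by
            rw [← Finset.sum_erase_add Finset.univ
                (fun u => ∑ v ∈ Finset.univ.erase z, f (G.dist u v)) (Finset.mem_univ z),
              ← Finset.sum_erase_add Finset.univ (fun u => f (G.dist u z)) (Finset.mem_univ z)]
          _ = _ := by rw [SimpleGraph.dist_self]; ring
      have hterm1 : (∑ u ∈ Finset.univ.erase z, ∑ v ∈ Finset.univ.erase z, f (G.dist u v))
          ≤ pathT f k (Fintype.card V - 1) := by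
        have hsub : (∑ u ∈ Finset.univ.erase z, ∑ v ∈ Finset.univ.erase z, f (G.dist u v))
            = ∑ a : {x : V // x ≠ z}, ∑ b : {x : V // x ≠ z}, f (G.dist a.val b.val) := by
          rw [Finset.sum_subtype (Finset.univ.erase z) hmem
            (fun u => ∑ v ∈ Finset.univ.erase z, f (G.dist u v))]
          apply Finset.sum_congr rfl
          intro a _
          rw [Finset.sum_subtype (Finset.univ.erase z) hmem (fun v => f (G.dist a.val v))]
        rw [hsub]
        refine le_trans ?_ IH
        apply Finset.sum_le_sum
        intro a _
        apply Finset.sum_le_sum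
        intro b _
        exact hf (comap_dist_le hconn' a b)
      have hterm2 : (∑ v ∈ Finset.univ.erase z, f (G.dist z v))
          ≤ ∑ d ∈ Finset.Icc 1 (Fintype.card V - 1), f (cdiv k d) :=
        ktree_transmission hk hG f hf z
      have hterm3 : (∑ u ∈ Finset.univ.erase z, f (G.dist u z))
          ≤ ∑ d ∈ Finset.Icc 1 (Fintype.card V - 1), f (cdiv k d) := by
        refine le_trans (le_of_eq ?_) hterm2
        apply Finset.sum_congr rfl
        intro u _
        rw [SimpleGraph.dist_comm]
      have hp := pathT_succ f hk (Fintype.card V - 1)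
      rw [show Fintype.card V - 1 + 1 = Fintype.card V from by omega] at hp
      rw [hsplit, hp]
      linarith

lemma double_sum_eq {W : Type*} [Fintype W] [DecidableEq W] (H : SimpleGraph W) (f : ℕ → ℝ) :
    ∑ u : W, ∑ v : W, f (H.dist u v) = 2 * wienerF H f + (Fintype.card W) * f 0 := by
  have h1 : ∑ u : W, ∑ v : W, f (H.dist u v)
      = ∑ x ∈ (Finset.univ ×ˢ Finset.univ : Finset (W × W)), f (H.dist x.1 x.2) :=
    (Finset.sum_product' (f := fun u v => f (H.dist u v)) _ _).symm
  rw [h1, ← Finset.diag_union_offDiag (Finset.univ : Finset W),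
    Finset.sum_union (Finset.disjoint_diag_offDiag _), Finset.sum_diag]
  have hdiag : ∑ a : W, f (H.dist a a) = (Fintype.card W) * f 0 := by
    rw [Finset.sum_congr rfl (fun a _ => by rw [SimpleGraph.dist_self]),
      Finset.sum_const, Finset.card_univ, nsmul_eq_mul]
  have hoff : ∑ x ∈ (Finset.univ : Finset W).offDiag, f (H.dist x.1 x.2)
      = 2 * wienerF H f := by
    have : ∀ x ∈ (Finset.univ : Finset W).offDiag,
        f (H.dist x.1 x.2) = (fun p => f (pairDist H p)) (Sym2.mk.uncurry x) := by
      rintro ⟨a, b⟩ _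
      simp [pairDist]
    rw [Finset.sum_congr rfl this, sum_offDiag_sym2 (fun p => f (pairDist H p))]
    rfl
  rw [hdiag, hoff]; ring


end Aux

/-- Among `k`-trees with `n` vertices, the `k`-th power of the path `P_n` maximises
every generalised Wiener index `W_f` with `f` nondecreasing. -/
theorem wienerF_le_wienerF_pathPower_of_kTree {V : Type*} [Fintype V] [DecidableEq V]
    (k n : ℕ) (hk : 0 < k) (hkn : k ≤ n - 1)
    (G : SimpleGraph V) (hcard : Fintype.card V = n) (hG : IsKTree G k)
    (f : ℕ → ℝ) (hf : Monotone f) :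
    wienerF G f ≤ wienerF (graphPow (SimpleGraph.pathGraph n) k) f := by
  have haux := main_aux f hf hk n V G hcard hG
  have hpath : pathT f k n
      = ∑ u : Fin n, ∑ v : Fin n, f ((graphPow (SimpleGraph.pathGraph n) k).dist u v) := by
    unfold pathT
    apply Finset.sum_congr rfl
    intro i _
    apply Finset.sum_congr rfl
    intro j _
    rw [powPath_dist hk]
  have h1 := double_sum_eq G f
  have h2 := double_sum_eq (graphPow (SimpleGraph.pathGraph n) k) f
  rw [h1] at haux
  rw [hpath, h2] at haux
  simp only [Fintype.card_fin, hcard] at haux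
  linarith
end

section
/- Let k, n be positive integers with k ≤ n−1 and let G be a maximal k-degenerate finite simple graph with n vertices. Then the Harary index satisfies H(G) ≥ H(P_n^k), where P_n^k is the k-th power of the path on n vertices. -/
open Finset

/-- The Harary index: the sum of the reciprocals of the distances over all
unordered pairs of distinct vertices. -/
noncomputable def hararyIdx {V : Type*} [Fintype V] [DecidableEq V]
    (G : SimpleGraph V) : ℝ :=
  ∑ p ∈ Finset.univ.filter (fun p : Sym2 V => ¬ p.IsDiag), (1 : ℝ) / (pairDist G p)

/-- `G` is `k`-degenerate: every nonempty induced subgraph has a vertex of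
degree at most `k` (the degree of `v` in the subgraph induced on `s` is the number
of neighbours of `v` lying in `s`). -/
def KDegenerate {V : Type*} (G : SimpleGraph V) (k : ℕ) : Prop :=
  ∀ s : Set V, s.Nonempty → ∃ v ∈ s, (s ∩ G.neighborSet v).ncard ≤ k

/-- `G` is maximal `k`-degenerate: it is `k`-degenerate and adding any edge between
nonadjacent vertices destroys `k`-degeneracy. -/
def MaxKDegenerate {V : Type*} (G : SimpleGraph V) (k : ℕ) : Prop :=
  KDegenerate G k ∧
    ∀ u v : V, u ≠ v → ¬ G.Adj u v → ¬ KDegenerate (G ⊔ SimpleGraph.edge u v) k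

namespace HP

open SimpleGraph

variable {V : Type*} [Fintype V] [DecidableEq V] {G : SimpleGraph V} {k : ℕ}

/-- ceiling division -/
def cdiv (k d : ℕ) : ℕ := (d + k - 1) / k

lemma cdiv_le_iff {k d D : ℕ} (hk : 0 < k) : cdiv k d ≤ D ↔ d ≤ k * D := by
  unfold cdiv
  rw [Nat.div_le_iff_le_mul_add_pred hk]
  omega

lemma one_le_cdiv {k d : ℕ} (hk : 0 < k) (hd : 0 < d) : 1 ≤ cdiv k d := by
  by_contra h
  push_neg at h
  interval_cases h' : cdiv k d
  · rw [show (0:ℕ) = 0 from rfl] at h'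
    have := (cdiv_le_iff (D := 0) hk).mp (le_of_eq h')
    omega

lemma cdiv_eq_one {k d : ℕ} (hk : 0 < k) (hd1 : 0 < d) (hdk : d ≤ k) : cdiv k d = 1 := by
  have h1 := one_le_cdiv hk hd1
  have h2 : cdiv k d ≤ 1 := (cdiv_le_iff hk).mpr (by omega)
  omega


lemma telescope (a b : ℕ) (ha : 1 ≤ a) (hab : a ≤ b + 1) :
    ∑ t ∈ Icc a b, ((1:ℝ)/t - 1/(t+1)) = 1/a - 1/(b+1) := by
  induction b with
  | zero =>
    have h1 : a = 1 := by omega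
    subst h1
    simp
  | succ b ih =>
    rcases Nat.lt_or_ge a (b + 2) with h | h
    · rw [Finset.sum_Icc_succ_top (by omega : a ≤ b + 1), ih (by omega)]
      push_cast
      ring
    · have : a = b + 2 := by omega
      subst this
      rw [Finset.Icc_eq_empty (by omega)]
      simp only [Finset.sum_empty]
      push_cast
      ring

lemma tel {T d : ℕ} (hd : 1 ≤ d) (hdT : d ≤ T) :
    (1:ℝ)/d = 1/T + ∑ t ∈ Icc 1 (T-1), (if d ≤ t then (1:ℝ)/t - 1/(t+1) else 0) := by
  rw [← Finset.sum_filter]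
  have hf : (Icc 1 (T-1)).filter (fun t => d ≤ t) = Icc d (T-1) := by
    ext t
    simp only [mem_filter, mem_Icc]
    omega
  rw [hf, telescope d (T-1) hd (by omega)]
  have : ((T - 1 : ℕ) : ℝ) = (T : ℝ) - 1 := by
    rw [Nat.cast_sub (by omega)]
    simp
  rw [this]
  ring

lemma count_le (T m : ℕ) : ((Icc 1 T).filter (fun j => j ≤ m)).card = min T m := by
  have : (Icc 1 T).filter (fun j => j ≤ m) = Icc 1 (min T m) := by
    ext t
    simp only [mem_filter, mem_Icc, le_min_iff]
    omega
  rw [this, Nat.card_Icc]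
  omega


lemma fiber_card (p : Sym2 V) (hp : ¬ p.IsDiag) :
    (((univ ×ˢ univ : Finset (V × V)).filter (fun z => z.1 ≠ z.2)).filter
      (fun z => Sym2.mk z.1 z.2 = p)).card = 2 := by
  induction p with
  | _ a b =>
    rw [Sym2.mk_isDiag_iff] at hp
    have : (((univ ×ˢ univ : Finset (V × V)).filter (fun z => z.1 ≠ z.2)).filter
        (fun z => Sym2.mk z.1 z.2 = s(a, b))) = {(a, b), (b, a)} := by
      ext ⟨z1, z2⟩
      simp only [mem_filter, mem_product, mem_univ, true_and, mem_insert, mem_singleton,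
        Sym2.eq_iff]
      constructor
      · rintro ⟨_, (⟨h1, h2⟩ | ⟨h1, h2⟩)⟩
        · left; exact Prod.ext h1 h2
        · right; exact Prod.ext h1 h2
      · rintro (h | h) <;> (rw [Prod.ext_iff] at h; obtain ⟨rfl, rfl⟩ := h) <;>
          simp [hp, Ne.symm hp]
    rw [this]
    rw [card_insert_of_notMem (by simp [Prod.ext_iff]; exact fun h => absurd h hp), card_singleton]

lemma sym2_sum (f : V → V → ℝ) (hsym : ∀ a b, f a b = f b a) :
    ∑ p ∈ univ.filter (fun p : Sym2 V => ¬ p.IsDiag), Sym2.lift ⟨f, hsym⟩ p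
      = (∑ u : V, ∑ v : V, if u = v then 0 else f u v) / 2 := by
  have key := Finset.sum_fiberwise_of_maps_to'
    (s := (univ ×ˢ univ : Finset (V × V)).filter (fun z => z.1 ≠ z.2))
    (t := univ.filter (fun p : Sym2 V => ¬ p.IsDiag))
    (g := fun z => Sym2.mk z.1 z.2)
    (f := fun p => Sym2.lift ⟨f, hsym⟩ p)
    (by
      intro z hz
      simp only [mem_filter, mem_univ, true_and] at hz ⊢
      rw [Sym2.isDiag_iff_proj_eq]
      exact hz.2)
  have hrhs : ∑ z ∈ (univ ×ˢ univ : Finset (V × V)).filter (fun z => z.1 ≠ z.2),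
      Sym2.lift ⟨f, hsym⟩ (Sym2.mk z.1 z.2) = ∑ u : V, ∑ v : V, if u = v then 0 else f u v := by
    rw [Finset.sum_filter, Finset.sum_product]
    congr 1; ext u; congr 1; ext v
    by_cases h : u = v <;> simp [h]
  have hlhs : ∀ p ∈ univ.filter (fun p : Sym2 V => ¬ p.IsDiag),
      ∑ _z ∈ ((univ ×ˢ univ : Finset (V × V)).filter (fun z => z.1 ≠ z.2)).filter
        (fun z => Sym2.mk z.1 z.2 = p), Sym2.lift ⟨f, hsym⟩ p = 2 * Sym2.lift ⟨f, hsym⟩ p := by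
    intro p hp
    rw [Finset.sum_const, fiber_card p (by simpa using hp)]
    rw [nsmul_eq_mul]
    norm_num
  rw [Finset.sum_congr rfl hlhs, ← Finset.mul_sum] at key
  rw [← hrhs, ← key]
  ring


lemma dist_map_le {W : Type*} {H : SimpleGraph W} (f : G →g H) {u v : V}
    (h : G.Reachable u v) : H.dist (f u) (f v) ≤ G.dist u v := by
  obtain ⟨p, hp⟩ := h.exists_walk_length_eq_dist
  calc H.dist (f u) (f v) ≤ (p.map f).length := SimpleGraph.dist_le _
    _ = p.length := SimpleGraph.Walk.length_map _ _
    _ = G.dist u v := hp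

lemma dist_lt_card {u v : V} (h : G.Reachable u v) : G.dist u v < Fintype.card V := by
  obtain ⟨p, hp, hl⟩ := h.exists_path_of_dist
  rw [← hl]
  exact hp.length_lt

lemma ncard_compl_singleton (v : V) : ({v}ᶜ : Set V).ncard = Fintype.card V - 1 := by
  rw [Set.ncard_eq_toFinset_card']
  simp [Set.toFinset_compl, Finset.card_compl]

lemma kdeg_of_card_le (h : Fintype.card V ≤ k + 1) (H : SimpleGraph V) : KDegenerate H k := by
  intro s hs
  obtain ⟨v, hv⟩ := hs
  refine ⟨v, hv, ?_⟩
  have hsub : s ∩ H.neighborSet v ⊆ {v}ᶜ := by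
    rintro x ⟨-, hx⟩
    simp only [Set.mem_compl_iff, Set.mem_singleton_iff]
    intro hxy
    exact H.loopless.irrefl v (hxy ▸ hx)
  calc (s ∩ H.neighborSet v).ncard ≤ ({v}ᶜ : Set V).ncard :=
        Set.ncard_le_ncard hsub (Set.toFinite _)
    _ = Fintype.card V - 1 := ncard_compl_singleton v
    _ ≤ k := by omega

lemma complete_of_max (hG : MaxKDegenerate G k) (hcard : Fintype.card V ≤ k + 1) :
    ∀ u v : V, u ≠ v → G.Adj u v := by
  intro u v huv
  by_contra h
  exact hG.2 u v huv h (kdeg_of_card_le hcard _)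

lemma min_degree (hG : MaxKDegenerate G k) (hn : k + 1 ≤ Fintype.card V) (v : V) :
    k ≤ (G.neighborSet v).ncard := by
  by_contra h
  push_neg at h
  have hne : ({v} ∪ G.neighborSet v : Set V) ≠ Set.univ := by
    intro heq
    have h1 : ({v} ∪ G.neighborSet v : Set V).ncard ≤ 1 + (G.neighborSet v).ncard :=
      le_trans (Set.ncard_union_le _ _) (by simp [Set.ncard_singleton])
    rw [heq, Set.ncard_univ] at h1
    simp only [Nat.card_eq_fintype_card] at h1
    omega
  obtain ⟨x, hx⟩ := Set.ne_univ_iff_exists_notMem _ |>.mp hne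
  simp only [Set.mem_union, Set.mem_singleton_iff, SimpleGraph.mem_neighborSet, not_or] at hx
  refine hG.2 v x (fun he => hx.1 he.symm) hx.2 ?_
  intro s hs
  by_cases hv : v ∈ s
  · refine ⟨v, hv, ?_⟩
    have hsub : s ∩ (G ⊔ SimpleGraph.edge v x).neighborSet v
        ⊆ (G.neighborSet v) ∪ {x} := by
      rintro y ⟨-, hy⟩
      simp only [SimpleGraph.mem_neighborSet, SimpleGraph.sup_adj, SimpleGraph.edge_adj] at hy
      rcases hy with hy | ⟨(⟨-, rfl⟩ | ⟨h1, -⟩), -⟩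
      · exact Or.inl hy
      · exact Or.inr rfl
      · exact absurd h1.symm hx.1
    calc (s ∩ (G ⊔ SimpleGraph.edge v x).neighborSet v).ncard
        ≤ ((G.neighborSet v) ∪ {x} : Set V).ncard :=
          Set.ncard_le_ncard hsub (Set.toFinite _)
      _ ≤ (G.neighborSet v).ncard + 1 := by
          refine le_trans (Set.ncard_union_le _ _) ?_
          simp [Set.ncard_singleton]
      _ ≤ k := by omega
  · obtain ⟨z, hz, hzc⟩ := hG.1 s hs
    refine ⟨z, hz, le_trans (Set.ncard_le_ncard ?_ (Set.toFinite _)) hzc⟩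
    rintro y ⟨hys, hy⟩
    refine ⟨hys, ?_⟩
    simp only [SimpleGraph.mem_neighborSet, SimpleGraph.sup_adj, SimpleGraph.edge_adj] at hy ⊢
    rcases hy with hy | ⟨(⟨rfl, rfl⟩ | ⟨-, rfl⟩), -⟩
    · exact hy
    · exact absurd hz hv
    · exact absurd hys hv


lemma card_compl_singleton (w : V) :
    Fintype.card ↥({w}ᶜ : Set V) = Fintype.card V - 1 := by
  rw [← Set.toFinset_card, Set.toFinset_compl, Set.toFinset_singleton,
    Finset.card_compl, Finset.card_singleton]

lemma induce_adj' {w : V} (x y : ↥({w}ᶜ : Set V)) :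
    (G.induce ({w}ᶜ : Set V)).Adj x y ↔ G.Adj ↑x ↑y := Iff.rfl

lemma sup_edge_adj_induce {w : V} (x y z u : ↥({w}ᶜ : Set V)) :
    ((G.induce ({w}ᶜ : Set V)) ⊔ SimpleGraph.edge x y).Adj z u ↔
      (G ⊔ SimpleGraph.edge (↑x : V) ↑y).Adj ↑z ↑u := by
  simp only [SimpleGraph.sup_adj, SimpleGraph.edge_adj, induce_adj',
    ← Subtype.ext_iff, ne_eq]

lemma val_ne_w {w : V} (x : ↥({w}ᶜ : Set V)) : (↑x : V) ≠ w :=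
  Set.mem_compl_singleton_iff.mp x.2

lemma kdeg_induce (hK : KDegenerate G k) (w : V) :
    KDegenerate (G.induce ({w}ᶜ : Set V)) k := by
  intro s hs
  obtain ⟨v, hv, hvc⟩ := hK (Subtype.val '' s) (hs.image _)
  obtain ⟨x, hx, rfl⟩ := hv
  refine ⟨x, hx, ?_⟩
  have himg : Subtype.val '' (s ∩ (G.induce ({w}ᶜ : Set V)).neighborSet x)
      ⊆ (Subtype.val '' s) ∩ G.neighborSet ↑x := by
    rintro - ⟨z, ⟨hz1, hz2⟩, rfl⟩
    exact ⟨⟨z, hz1, rfl⟩, hz2⟩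
  calc (s ∩ (G.induce ({w}ᶜ : Set V)).neighborSet x).ncard
      = (Subtype.val '' (s ∩ (G.induce ({w}ᶜ : Set V)).neighborSet x)).ncard :=
        (Set.ncard_image_of_injective _ Subtype.val_injective).symm
    _ ≤ ((Subtype.val '' s) ∩ G.neighborSet ↑x).ncard :=
        Set.ncard_le_ncard himg (Set.toFinite _)
    _ ≤ k := hvc

lemma maxkdeg_induce (hG : MaxKDegenerate G k) (w : V)
    (hw : (G.neighborSet w).ncard ≤ k) :
    MaxKDegenerate (G.induce ({w}ᶜ : Set V)) k := by
  constructor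
  · exact kdeg_induce hG.1 w
  · rintro x y hxy hnadj hKD'
    refine hG.2 ↑x ↑y (fun h => hxy (Subtype.val_injective h))
      (fun h => hnadj h) ?_
    intro s hs
    by_cases hws : w ∈ s
    · refine ⟨w, hws, ?_⟩
      have hsub : s ∩ (G ⊔ SimpleGraph.edge (↑x : V) ↑y).neighborSet w
          ⊆ G.neighborSet w := by
        rintro u ⟨-, hu⟩
        simp only [SimpleGraph.mem_neighborSet, SimpleGraph.sup_adj,
          SimpleGraph.edge_adj] at hu ⊢
        rcases hu with hu | ⟨(⟨h1, -⟩ | ⟨h1, -⟩), -⟩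
        · exact hu
        · exact absurd h1.symm (val_ne_w x)
        · exact absurd h1.symm (val_ne_w y)
      exact le_trans (Set.ncard_le_ncard hsub (Set.toFinite _)) hw
    · have hs' : ({z : ↥({w}ᶜ : Set V) | ↑z ∈ s}).Nonempty := by
        obtain ⟨a, ha⟩ := hs
        have haw : a ∈ ({w}ᶜ : Set V) := by
          simp only [Set.mem_compl_iff, Set.mem_singleton_iff]
          rintro rfl; exact hws ha
        exact ⟨⟨a, haw⟩, ha⟩
      obtain ⟨z, hz, hzc⟩ := hKD' {z | ↑z ∈ s} hs'
      refine ⟨↑z, hz, ?_⟩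
      have heq : s ∩ (G ⊔ SimpleGraph.edge (↑x : V) ↑y).neighborSet ↑z
          = Subtype.val '' ({z' : ↥({w}ᶜ : Set V) | ↑z' ∈ s} ∩
              ((G.induce ({w}ᶜ : Set V)) ⊔ SimpleGraph.edge x y).neighborSet z) := by
        ext u
        constructor
        · rintro ⟨hu1, hu2⟩
          have huw : u ∈ ({w}ᶜ : Set V) := by
            simp only [Set.mem_compl_iff, Set.mem_singleton_iff]
            rintro rfl; exact hws hu1
          refine ⟨⟨u, huw⟩, ⟨hu1, ?_⟩, rfl⟩
          exact (sup_edge_adj_induce x y z ⟨u, huw⟩).mpr hu2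
        · rintro ⟨u', ⟨hu1, hu2⟩, rfl⟩
          exact ⟨hu1, (sup_edge_adj_induce x y z u').mp hu2⟩
      rw [heq, Set.ncard_image_of_injective _ Subtype.val_injective]
      exact hzc


/-- outer vertex boundary -/
def bdry {V : Type*} (G : SimpleGraph V) (S : Set V) : Set V :=
  {v | v ∉ S ∧ ∃ u ∈ S, G.Adj u v}

universe u

lemma exp (k : ℕ) (hk : 0 < k) :
    ∀ n : ℕ, ∀ (V : Type u) [Fintype V] [DecidableEq V] (G : SimpleGraph V),
      k + 1 ≤ n → Fintype.card V = n → MaxKDegenerate G k →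
      ∀ S : Set V, S.Nonempty → S ∪ bdry G S ≠ Set.univ → k ≤ (bdry G S).ncard := by
  intro n
  induction n using Nat.strong_induction_on with
  | _ n ih =>
  intro V _ _ G hn hcard hG S hS hSne
  rcases eq_or_lt_of_le hn with heq | hlt
  · -- base case : complete graph, boundary covers everything
    exfalso
    apply hSne
    obtain ⟨v, hv⟩ := hS
    ext u
    simp only [Set.mem_union, Set.mem_univ, iff_true]
    by_cases hu : u ∈ S
    · exact Or.inl hu
    · refine Or.inr ⟨hu, v, hv, ?_⟩
      have huv : v ≠ u := by rintro rfl; exact hu hv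
      exact complete_of_max hG (by omega) v u huv
  · -- step
    have hkcard : k + 1 ≤ Fintype.card V := by omega
    have hV : Nonempty V := by
      have : 0 < Fintype.card V := by omega
      exact Fintype.card_pos_iff.mp this
    obtain ⟨w, -, hwdeg⟩ := hG.1 Set.univ ⟨Classical.arbitrary V, trivial⟩
    rw [Set.univ_inter] at hwdeg
    have hdegk : k ≤ (G.neighborSet w).ncard := min_degree hG hkcard w
    have hG' : MaxKDegenerate (G.induce ({w}ᶜ : Set V)) k := maxkdeg_induce hG w hwdeg
    have hcard' : Fintype.card ↥({w}ᶜ : Set V) = n - 1 := by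
      rw [card_compl_singleton, hcard]
    set G' := G.induce ({w}ᶜ : Set V) with hG'def
    -- transfer of boundary
    have hbdry_sub : ∀ S' : Set ↥({w}ᶜ : Set V),
        (∀ z, z ∈ S' ↔ (z : V) ∈ S) →
        Subtype.val '' (bdry G' S') ⊆ bdry G S := by
      intro S' hS' z' hz'
      obtain ⟨z, ⟨hz1, x, hx1, hx2⟩, rfl⟩ := hz'
      exact ⟨fun h => hz1 ((hS' z).mpr h), ↑x, (hS' x).mp hx1, hx2⟩
    have hbd_card : ∀ S' : Set ↥({w}ᶜ : Set V),
        (∀ z, z ∈ S' ↔ (z : V) ∈ S) →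
        (bdry G' S').ncard ≤ (bdry G S).ncard := by
      intro S' hS'
      calc (bdry G' S').ncard = (Subtype.val '' (bdry G' S')).ncard :=
            (Set.ncard_image_of_injective _ Subtype.val_injective).symm
        _ ≤ (bdry G S).ncard :=
            Set.ncard_le_ncard (hbdry_sub S' hS') (Set.toFinite _)
    set S' : Set ↥({w}ᶜ : Set V) := {z | (z : V) ∈ S} with hS'def
    have hS'mem : ∀ z, z ∈ S' ↔ (z : V) ∈ S := fun z => Iff.rfl
    by_cases hwS : w ∈ S
    · by_cases hSw : S = {w}
      · -- S = {w} : boundary is the neighbor set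
        subst hSw
        have : bdry G {w} = G.neighborSet w := by
          ext u
          constructor
          · rintro ⟨-, x, hx, hadj⟩
            rw [Set.mem_singleton_iff] at hx
            subst hx
            exact hadj
          · intro hu
            exact ⟨fun h => G.loopless.irrefl w (by rwa [Set.mem_singleton_iff] at h ▸ hu), w, rfl,
              hu⟩
        rw [this]
        exact hdegk
      · -- S has an element other than w
        have hS'ne : S'.Nonempty := by
          by_contra h
          rw [Set.not_nonempty_iff_eq_empty] at h
          apply hSw
          ext a
          simp only [Set.mem_singleton_iff]
          constructor
          · intro ha
            by_contra haw
            have : (⟨a, haw⟩ : ↥({w}ᶜ : Set V)) ∈ S' := ha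
            rw [h] at this
            exact this
          · rintro rfl; exact hwS
        by_cases hcov : S' ∪ bdry G' S' = Set.univ
        · exfalso
          apply hSne
          ext u
          simp only [Set.mem_union, Set.mem_univ, iff_true]
          by_cases huw : u = w
          · exact Or.inl (huw ▸ hwS)
          · have : (⟨u, huw⟩ : ↥({w}ᶜ : Set V)) ∈ S' ∪ bdry G' S' := by
              rw [hcov]; trivial
            rcases this with h | h
            · exact Or.inl h
            · exact Or.inr (hbdry_sub S' hS'mem ⟨_, h, rfl⟩)
        · have := ih (n-1) (by omega) ↥({w}ᶜ : Set V) G' (by omega) hcard' hG' S' hS'ne hcov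
          exact le_trans this (hbd_card S' hS'mem)
    · -- w ∉ S
      have hS'ne : S'.Nonempty := by
        obtain ⟨a, ha⟩ := hS
        have haw : a ≠ w := by rintro rfl; exact hwS ha
        exact ⟨⟨a, haw⟩, ha⟩
      by_cases hcov : S' ∪ bdry G' S' = Set.univ
      · -- neighborhood of w is inside the boundary
        have hwnot : w ∉ S ∪ bdry G S := by
          obtain ⟨z₀, hz₀⟩ := Set.ne_univ_iff_exists_notMem _ |>.mp hSne
          by_cases hzw : z₀ = w
          · rwa [← hzw]
          · exfalso
            have : (⟨z₀, hzw⟩ : ↥({w}ᶜ : Set V)) ∈ S' ∪ bdry G' S' := by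
              rw [hcov]; trivial
            rcases this with h | h
            · exact hz₀ (Or.inl h)
            · exact hz₀ (Or.inr (hbdry_sub S' hS'mem ⟨_, h, rfl⟩))
        have hNsub : G.neighborSet w ⊆ bdry G S := by
          intro x hx
          have hxw : x ≠ w := fun h => G.loopless.irrefl w (h ▸ hx)
          have : (⟨x, hxw⟩ : ↥({w}ᶜ : Set V)) ∈ S' ∪ bdry G' S' := by
            rw [hcov]; trivial
          rcases this with h | h
          · exfalso
            apply hwnot
            exact Or.inr ⟨fun hws => hwnot (Or.inl hws), x, h, hx.symm⟩
          · exact hbdry_sub S' hS'mem ⟨_, h, rfl⟩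
        calc k ≤ (G.neighborSet w).ncard := hdegk
          _ ≤ (bdry G S).ncard := Set.ncard_le_ncard hNsub (Set.toFinite _)
      · have := ih (n-1) (by omega) ↥({w}ᶜ : Set V) G' (by omega) hcard' hG' S' hS'ne hcov
        exact le_trans this (hbd_card S' hS'mem)


lemma conn (hk : 0 < k) (hG : MaxKDegenerate G k) (hn : k + 1 ≤ Fintype.card V) :
    G.Connected := by
  have hV : Nonempty V := Fintype.card_pos_iff.mp (by omega)
  rw [SimpleGraph.connected_iff]
  refine ⟨?_, hV⟩
  intro u v
  set S : Set V := {x | G.Reachable u x} with hSdef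
  have hbd : bdry G S = ∅ := by
    ext z
    simp only [bdry, Set.mem_setOf_eq, Set.mem_empty_iff_false, iff_false, not_and]
    intro hz
    rintro ⟨y, hy, hadj⟩
    exact hz (hy.trans hadj.reachable)
  have hSuniv : S = Set.univ := by
    by_contra h
    have := exp k hk (Fintype.card V) V G hn rfl hG S ⟨u, Reachable.refl u⟩ (by rw [hbd, Set.union_empty]; exact h)
    rw [hbd, Set.ncard_empty] at this
    omega
  have : v ∈ S := by rw [hSuniv]; trivial
  exact this

/-- the ball of radius `t` around `v` -/
def ball (G : SimpleGraph V) (v : V) (t : ℕ) : Set V := {u | G.dist v u ≤ t}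

lemma ball_card (hk : 0 < k) (hG : MaxKDegenerate G k) (hn : k + 1 ≤ Fintype.card V)
    (v : V) : ∀ t : ℕ, min (Fintype.card V) (t * k + 1) ≤ (ball G v t).ncard := by
  have hconn : G.Connected := conn hk hG hn
  intro t
  induction t with
  | zero =>
    have h1 : ({v} : Set V) ⊆ ball G v 0 := by
      rintro x hx
      rw [Set.mem_singleton_iff] at hx
      subst hx
      simp [ball]
    calc min (Fintype.card V) (0 * k + 1) ≤ 1 := by omega
      _ = ({v} : Set V).ncard := (Set.ncard_singleton v).symm
      _ ≤ (ball G v 0).ncard := Set.ncard_le_ncard h1 (Set.toFinite _)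
  | succ t iht =>
    set B := ball G v t with hBdef
    have hBsub : B ∪ bdry G B ⊆ ball G v (t+1) := by
      rintro u (hu | ⟨hu1, x, hx, hadj⟩)
      · rw [hBdef] at hu
        simp only [ball, Set.mem_setOf_eq] at hu ⊢
        omega
      · have h3 : G.dist v u ≤ G.dist v x + G.dist x u := hconn.dist_triangle
        have h4 : G.dist x u = 1 := by
          rw [SimpleGraph.dist_eq_one_iff_adj]; exact hadj
        have h5 : G.dist v x ≤ t := hx
        simp only [ball, Set.mem_setOf_eq]
        omega
    by_cases hcov : B ∪ bdry G B = Set.univ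
    · have : ball G v (t+1) = Set.univ :=
        Set.eq_univ_of_subset hBsub hcov
      rw [this, Set.ncard_univ, Nat.card_eq_fintype_card]
      omega
    · have hBne : B.Nonempty := ⟨v, by simp [hBdef, ball, SimpleGraph.dist_self]⟩
      have hbd := exp k hk (Fintype.card V) V G hn rfl hG B hBne hcov
      have hdisj : Disjoint B (bdry G B) := by
        rw [Set.disjoint_left]
        rintro x hx ⟨hx1, -⟩
        exact hx1 hx
      have hunion : (B ∪ bdry G B).ncard = B.ncard + (bdry G B).ncard :=
        Set.ncard_union_eq hdisj (Set.toFinite _) (Set.toFinite _)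
      have hBlt : B.ncard + (bdry G B).ncard ≤ (ball G v (t+1)).ncard := by
        rw [← hunion]
        exact Set.ncard_le_ncard hBsub (Set.toFinite _)
      -- B is not everything
      have hBn : t * k + 1 ≤ B.ncard := by
        rcases le_or_gt (Fintype.card V) (t * k + 1) with h | h
        · exfalso
          have : B.ncard = Fintype.card V := le_antisymm
            (le_trans (Set.ncard_le_ncard (Set.subset_univ B) (Set.toFinite _))
              (by rw [Set.ncard_univ, Nat.card_eq_fintype_card]))
            (le_trans (by omega) iht)
          have hBuniv : B = Set.univ := by
            apply Set.eq_of_subset_of_ncard_le (Set.subset_univ B)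
            rw [Set.ncard_univ, Nat.card_eq_fintype_card, this]
          apply hcov
          rw [hBuniv]
          exact Set.eq_univ_of_subset Set.subset_union_left rfl
        · omega
      calc min (Fintype.card V) ((t+1) * k + 1) ≤ (t+1) * k + 1 := min_le_right _ _
        _ ≤ B.ncard + (bdry G B).ncard := by
            have : (t+1) * k + 1 = (t * k + 1) + k := by ring
            omega
        _ ≤ (ball G v (t+1)).ncard := hBlt


lemma trans_bound (hk : 0 < k) (hG : MaxKDegenerate G k)
    (hn : k + 1 ≤ Fintype.card V) (v : V) :
    ∑ j ∈ Icc 1 (Fintype.card V - 1), (1:ℝ)/(cdiv k j) ≤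
      ∑ u ∈ univ.erase v, (1:ℝ)/(G.dist v u) := by
  have hconn : G.Connected := conn hk hG hn
  set n := Fintype.card V with hndef
  set T := n - 1 with hTdef
  have hT1 : 1 ≤ T := by omega
  -- rewrite RHS summands
  have hR : ∀ u ∈ univ.erase v, (1:ℝ)/(G.dist v u) =
      1/T + ∑ t ∈ Icc 1 (T-1), (if G.dist v u ≤ t then (1:ℝ)/t - 1/(t+1) else 0) := by
    intro u hu
    have huv : v ≠ u := fun h => (Finset.mem_erase.mp hu).1 h.symm
    have hd1 : 1 ≤ G.dist v u := hconn.pos_dist_of_ne huv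
    have hd2 : G.dist v u ≤ T := by
      have := dist_lt_card (hconn.preconnected v u)
      omega
    exact tel hd1 hd2
  have hL : ∀ j ∈ Icc 1 T, (1:ℝ)/(cdiv k j) =
      1/T + ∑ t ∈ Icc 1 (T-1), (if cdiv k j ≤ t then (1:ℝ)/t - 1/(t+1) else 0) := by
    intro j hj
    rw [Finset.mem_Icc] at hj
    have h1 : 1 ≤ cdiv k j := one_le_cdiv hk (by omega)
    have h2 : cdiv k j ≤ T := by
      rw [cdiv_le_iff hk]
      calc j ≤ T := hj.2
        _ ≤ k * T := Nat.le_mul_of_pos_left T hk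
    exact tel h1 h2
  rw [Finset.sum_congr rfl hR, Finset.sum_congr rfl hL, Finset.sum_add_distrib,
    Finset.sum_add_distrib]
  have hcards : (Icc 1 T).card = (univ.erase v).card := by
    rw [Nat.card_Icc, Finset.card_erase_of_mem (Finset.mem_univ v), Finset.card_univ]
    omega
  have hconst : ∑ _j ∈ Icc 1 T, (1:ℝ)/T = ∑ _u ∈ univ.erase v, (1:ℝ)/T := by
    rw [Finset.sum_const, Finset.sum_const, hcards]
  rw [hconst]
  refine add_le_add le_rfl ?_
  rw [Finset.sum_comm, Finset.sum_comm (s := univ.erase v)]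
  apply Finset.sum_le_sum
  intro t ht
  rw [Finset.mem_Icc] at ht
  have hc : (0:ℝ) ≤ 1/t - 1/(t+1) := by
    rw [sub_nonneg]
    apply one_div_le_one_div_of_le
    · exact_mod_cast ht.1
    · push_cast; linarith
  rw [← Finset.sum_filter, ← Finset.sum_filter, Finset.sum_const, Finset.sum_const]
  have hcount1 : ((Icc 1 T).filter (fun j => cdiv k j ≤ t)).card = min T (k * t) := by
    rw [Finset.filter_congr (fun j _ => by rw [cdiv_le_iff hk]), count_le]
  have hcount2 : min T (k * t) ≤ ((univ.erase v).filter (fun u => G.dist v u ≤ t)).card := by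
    have hfe : (univ.erase v).filter (fun u => G.dist v u ≤ t) =
        (univ.filter (fun u => G.dist v u ≤ t)).erase v := by
      rw [Finset.filter_erase]
    have hmem : v ∈ univ.filter (fun u => G.dist v u ≤ t) := by
      simp [SimpleGraph.dist_self]
    have hballcard : (ball G v t).ncard = (univ.filter (fun u => G.dist v u ≤ t)).card := by
      have hbeq : ball G v t = ↑(univ.filter (fun u => G.dist v u ≤ t)) := by
        ext u
        simp [ball]
      rw [hbeq, Set.ncard_coe_finset]
    have hball := ball_card hk hG hn v t
    rw [hballcard] at hball
    rw [hfe, Finset.card_erase_of_mem hmem]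
    have hmc : k * t = t * k := Nat.mul_comm k t
    omega
  rw [hcount1]
  calc (min T (k*t)) • ((1:ℝ)/t - 1/(t+1)) ≤
      ((univ.erase v).filter (fun u => G.dist v u ≤ t)).card • ((1:ℝ)/t - 1/(t+1)) := by
        apply nsmul_le_nsmul_left hc hcount2
    _ = _ := rfl


/-- The quantity `A k n`: the Harary index of the k-th power of the path on n vertices -/
noncomputable def A (k n : ℕ) : ℝ := ∑ d ∈ Icc 1 (n-1), ((n:ℝ) - d) / (cdiv k d)

/-- the summed double-counting version of the Harary index -/
noncomputable def Ssum {V : Type*} [Fintype V] [DecidableEq V] (G : SimpleGraph V) : ℝ :=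
  ∑ u : V, ∑ v : V, if u = v then 0 else 1/(G.dist u v)

lemma harary_eq {V : Type*} [Fintype V] [DecidableEq V] (G : SimpleGraph V) :
    hararyIdx G = Ssum G / 2 := by
  rw [Ssum, ← sym2_sum (fun u v => (1:ℝ)/(G.dist u v))
    (fun a b => show (1:ℝ)/(G.dist a b) = (1:ℝ)/(G.dist b a) by rw [SimpleGraph.dist_comm])]
  unfold hararyIdx
  apply Finset.sum_congr rfl
  intro p hp
  induction p with
  | _ a b => simp [pairDist]

lemma sum_Icc_cast (N : ℕ) : ∑ d ∈ Icc 1 N, (d:ℝ) = N * (N+1) / 2 := by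
  induction N with
  | zero => simp
  | succ N ihN =>
    rw [Finset.sum_Icc_succ_top (by omega), ihN]
    push_cast
    ring

lemma A_base (k : ℕ) (hk : 0 < k) : A k (k+1) = ((k:ℝ) * (k+1)) / 2 := by
  unfold A
  simp only [Nat.add_sub_cancel]
  have h1 : ∀ d ∈ Icc 1 k, ((k:ℝ) + 1 - d) / (cdiv k d) = ((k:ℝ) + 1) - d := by
    intro d hd
    rw [Finset.mem_Icc] at hd
    rw [cdiv_eq_one hk (by omega) hd.2]
    push_cast
    ring
  rw [Finset.sum_congr rfl (fun d hd => by rw [Nat.cast_add, Nat.cast_one, h1 d hd])]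
  rw [Finset.sum_sub_distrib, Finset.sum_const, sum_Icc_cast, Nat.card_Icc]
  simp only [Nat.add_sub_cancel, nsmul_eq_mul]
  ring

lemma A_succ (k n : ℕ) (hk : 0 < k) (hn : 1 ≤ n) :
    A k (n+1) = A k n + ∑ j ∈ Icc 1 n, (1:ℝ)/(cdiv k j) := by
  obtain ⟨m, rfl⟩ : ∃ m, n = m + 1 := ⟨n - 1, by omega⟩
  unfold A
  simp only [Nat.add_sub_cancel]
  have h1 : ∀ d ∈ Icc 1 (m+1), ((m:ℝ) + 1 + 1 - d) / (cdiv k d)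
      = ((m:ℝ) + 1 - d) / (cdiv k d) + 1 / (cdiv k d) := by
    intro d hd
    rw [Finset.mem_Icc] at hd
    have hc : (0:ℝ) < (cdiv k d : ℝ) := by
      have : 1 ≤ cdiv k d := by
        unfold cdiv
        rw [Nat.le_div_iff_mul_le hk]
        omega
      exact_mod_cast this
    field_simp
    ring
  rw [show ((m:ℕ)+1+1 : ℕ) = m+2 from rfl]
  have hc2 : ∀ d ∈ Icc 1 (m+1), ((m+2:ℕ):ℝ) - d = ((m:ℝ)+1+1-d) := by
    intro d _; push_cast; ring
  rw [Finset.sum_congr rfl (fun d hd => by rw [hc2 d hd, h1 d hd]), Finset.sum_add_distrib]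
  congr 1
  rw [Finset.sum_Icc_succ_top (by omega : 1 ≤ m + 1)]
  have : ((m:ℝ) + 1 - ((m:ℕ)+1 : ℕ)) / (cdiv k (m+1)) = 0 := by
    push_cast
    ring_nf
  rw [this, add_zero]
  apply Finset.sum_congr rfl
  intro d hd
  rw [Finset.mem_Icc] at hd
  push_cast
  ring_nf

lemma main (k : ℕ) (hk : 0 < k) :
    ∀ n : ℕ, ∀ (V : Type u) [Fintype V] [DecidableEq V] (G : SimpleGraph V),
      k + 1 ≤ n → Fintype.card V = n → MaxKDegenerate G k → A k n ≤ hararyIdx G := by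
  intro n
  induction n using Nat.strong_induction_on with
  | _ n ih =>
  intro V _ _ G hn hcard hG
  rw [harary_eq]
  rcases eq_or_lt_of_le hn with heq | hlt
  · -- base case : complete graph
    have hadj : ∀ u v : V, u ≠ v → G.Adj u v := complete_of_max hG (by omega)
    have hrow : ∀ u : V, ∑ v : V, (if u = v then (0:ℝ) else 1/(G.dist u v))
        = (n:ℝ) - 1 := by
      intro u
      have : ∀ v : V, (if u = v then (0:ℝ) else 1/(G.dist u v))
          = (if u = v then (0:ℝ) else 1) := by
        intro v
        by_cases h : u = v
        · simp [h]
        · have : G.dist u v = 1 := SimpleGraph.dist_eq_one_iff_adj.mpr (hadj u v h)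
          simp [h, this]
      rw [Finset.sum_congr rfl (fun v _ => this v)]
      rw [← Finset.add_sum_erase _ _ (Finset.mem_univ u)]
      simp only [if_pos rfl, zero_add]
      have : ∀ v ∈ univ.erase u, (if u = v then (0:ℝ) else 1) = 1 := by
        intro v hv
        rw [if_neg (fun h => (Finset.mem_erase.mp hv).1 h.symm)]
      rw [Finset.sum_congr rfl this, Finset.sum_const, Finset.card_erase_of_mem
        (Finset.mem_univ u), Finset.card_univ, hcard, nsmul_eq_mul]
      have hn1 : 1 ≤ n := by omega
      push_cast [Nat.cast_sub hn1]
      ring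
    rw [Ssum, Finset.sum_congr rfl (fun u _ => hrow u), Finset.sum_const,
      Finset.card_univ, hcard, nsmul_eq_mul, ← heq, A_base k hk]
    push_cast
    ring_nf
    -- (k*(k+1))/2 ≤ (k+1)*((k+1)-1)/2
    nlinarith [hk]
  · -- inductive step
    have hkcard : k + 1 ≤ Fintype.card V := by omega
    have hV : Nonempty V := Fintype.card_pos_iff.mp (by omega)
    obtain ⟨w, -, hwdeg⟩ := hG.1 Set.univ ⟨Classical.arbitrary V, trivial⟩
    rw [Set.univ_inter] at hwdeg
    have hG' : MaxKDegenerate (G.induce ({w}ᶜ : Set V)) k := maxkdeg_induce hG w hwdeg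
    have hcard' : Fintype.card ↥({w}ᶜ : Set V) = n - 1 := by
      rw [card_compl_singleton, hcard]
    have hconn : G.Connected := conn hk hG hkcard
    have hconn' : (G.induce ({w}ᶜ : Set V)).Connected :=
      conn hk hG' (by rw [hcard']; omega)
    have hIH := ih (n-1) (by omega) ↥({w}ᶜ : Set V) (G.induce ({w}ᶜ : Set V))
      (by omega) hcard' hG'
    rw [harary_eq] at hIH
    -- split the double sum
    set g : V → V → ℝ := fun u v => if u = v then 0 else 1/(G.dist u v) with hgdef
    have hgsymm : ∀ u v, g u v = g v u := by
      intro u v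
      by_cases h : u = v
      · simp [hgdef, h]
      · simp only [hgdef, if_neg h, if_neg (Ne.symm h)]
        rw [SimpleGraph.dist_comm]
    have hsplit : Ssum G = (∑ u ∈ univ.erase w, ∑ v ∈ univ.erase w, g u v)
        + 2 * ∑ v ∈ univ.erase w, g w v := by
      rw [Ssum]
      rw [← Finset.add_sum_erase _ (fun u => ∑ v : V, g u v) (Finset.mem_univ w)]
      have h1 : ∑ v : V, g w v = ∑ v ∈ univ.erase w, g w v := by
        rw [← Finset.add_sum_erase _ (g w) (Finset.mem_univ w)]
        simp [hgdef]
      have h2 : ∀ u ∈ univ.erase w, ∑ v : V, g u v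
          = g u w + ∑ v ∈ univ.erase w, g u v := by
        intro u _
        rw [← Finset.add_sum_erase _ (g u) (Finset.mem_univ w)]
      rw [h1, Finset.sum_congr rfl h2, Finset.sum_add_distrib]
      have h3 : ∑ u ∈ univ.erase w, g u w = ∑ u ∈ univ.erase w, g w u :=
        Finset.sum_congr rfl (fun u _ => hgsymm u w)
      rw [h3]
      ring
    -- the row bound
    have hrow : ∑ j ∈ Icc 1 (n-1), (1:ℝ)/(cdiv k j) ≤ ∑ v ∈ univ.erase w, g w v := by
      have := trans_bound hk hG hkcard w
      rw [hcard] at this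
      refine le_trans this (le_of_eq (Finset.sum_congr rfl ?_))
      intro v hv
      rw [hgdef]
      simp only
      rw [if_neg (fun h => (Finset.mem_erase.mp hv).1 h.symm)]
    -- the induced bound
    have hrest : Ssum (G.induce ({w}ᶜ : Set V)) ≤
        ∑ u ∈ univ.erase w, ∑ v ∈ univ.erase w, g u v := by
      rw [Ssum]
      have hmem : ∀ x : V, x ∈ univ.erase w ↔ x ∈ ({w}ᶜ : Set V) := by
        intro x
        simp [Finset.mem_erase, Set.mem_compl_singleton_iff]
      rw [Finset.sum_subtype _ hmem (fun u => ∑ v ∈ univ.erase w, g u v)]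
      apply Finset.sum_le_sum
      intro x _
      rw [Finset.sum_subtype _ hmem (fun v => g (↑x) v)]
      apply Finset.sum_le_sum
      intro y _
      by_cases hxy : x = y
      · subst hxy
        simp [hgdef]
      · have hvxy : (↑x : V) ≠ ↑y := fun h => hxy (Subtype.val_injective h)
        rw [hgdef]
        simp only [if_neg hxy, if_neg hvxy]
        have hle : G.dist ↑x ↑y ≤ (G.induce ({w}ᶜ : Set V)).dist x y := by
          have hre : (G.induce ({w}ᶜ : Set V)).Reachable x y := hconn'.preconnected x y
          exact dist_map_le (SimpleGraph.Embedding.induce ({w}ᶜ : Set V)).toHom hre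
        have hpos : 0 < G.dist ↑x ↑y := hconn.pos_dist_of_ne hvxy
        apply one_div_le_one_div_of_le
        · exact_mod_cast hpos
        · exact_mod_cast hle
    -- combine
    have hA : A k n = A k (n-1) + ∑ j ∈ Icc 1 (n-1), (1:ℝ)/(cdiv k j) := by
      have := A_succ k (n-1) hk (by omega)
      rw [show (n-1)+1 = n by omega] at this
      exact this
    rw [hA]
    have := hIH
    linarith [hrow, hrest, hIH]


/-- distance on ℕ -/
def dd (a b : ℕ) : ℕ := max a b - min a b

lemma dd_symm (a b : ℕ) : dd a b = dd b a := by unfold dd; omega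

lemma cdiv_zero (k : ℕ) : cdiv k 0 = 0 := by
  unfold cdiv
  rcases Nat.eq_zero_or_pos k with rfl | hk
  · rfl
  · apply Nat.div_eq_of_lt
    omega

lemma path_walk_bound {n : ℕ} {u v : Fin n} (p : (SimpleGraph.pathGraph n).Walk u v) :
    (v:ℕ) ≤ (u:ℕ) + p.length ∧ (u:ℕ) ≤ (v:ℕ) + p.length := by
  induction p with
  | nil => omega
  | cons h p ih =>
    rw [SimpleGraph.pathGraph_adj] at h
    rw [SimpleGraph.Walk.length_cons]
    omega

lemma path_dist_lb {n : ℕ} (u v : Fin n) :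
    dd (u:ℕ) (v:ℕ) ≤ (SimpleGraph.pathGraph n).dist u v := by
  have hn : n ≠ 0 := fun h => by subst h; exact u.elim0
  obtain ⟨m, rfl⟩ : ∃ m, n = m + 1 := ⟨n - 1, by omega⟩
  have hre : (SimpleGraph.pathGraph (m+1)).Reachable u v :=
    (SimpleGraph.pathGraph_connected m).preconnected u v
  obtain ⟨p, hp⟩ := hre.exists_walk_length_eq_dist
  have := path_walk_bound p
  unfold dd
  omega

lemma pow_walk_bound {n k : ℕ} {u v : Fin n} (p : (graphPow (SimpleGraph.pathGraph n) k).Walk u v) :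
    dd (u:ℕ) (v:ℕ) ≤ k * p.length := by
  induction p with
  | nil => simp [dd]
  | cons h p ih =>
    obtain ⟨hne, hdist⟩ := id h
    have hstep := le_trans (path_dist_lb _ _) hdist
    rw [SimpleGraph.Walk.length_cons]
    unfold dd at *
    rw [Nat.mul_add, Nat.mul_one]
    omega

lemma pow_pair_bound {n k : ℕ} (hk : 0 < k) {u v : Fin n} (huv : u ≠ v) :
    (1:ℝ)/((graphPow (SimpleGraph.pathGraph n) k).dist u v) ≤
      1/(cdiv k (dd (u:ℕ) (v:ℕ))) := by
  set D := (graphPow (SimpleGraph.pathGraph n) k).dist u v with hDdef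
  by_cases hD : D = 0
  · rw [hD]
    simp only [Nat.cast_zero, div_zero]
    positivity
  · obtain ⟨p, hp⟩ := SimpleGraph.exists_walk_of_dist_ne_zero hD
    have hwb := pow_walk_bound p
    rw [hp] at hwb
    have h1 : cdiv k (dd (u:ℕ) (v:ℕ)) ≤ D := (cdiv_le_iff hk).mpr hwb
    have h2 : 1 ≤ cdiv k (dd (u:ℕ) (v:ℕ)) := by
      apply one_le_cdiv hk
      have : (u:ℕ) ≠ (v:ℕ) := fun h => huv (Fin.ext h)
      unfold dd
      omega
    apply one_div_le_one_div_of_le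
    · exact_mod_cast h2
    · exact_mod_cast h1

lemma count_sum (F : ℕ → ℝ) (hF0 : F 0 = 0) :
    ∀ n : ℕ, ∑ i ∈ range n, ∑ j ∈ range n, F (dd i j)
      = 2 * ∑ d ∈ Icc 1 (n-1), ((n - d : ℕ) : ℝ) * F d := by
  have hrow : ∀ n : ℕ, ∑ j ∈ range n, F (dd n j) = ∑ d ∈ Icc 1 n, F d := by
    intro n
    have h1 : ∀ j ∈ range n, F (dd n j) = F (n - j) := by
      intro j hj
      rw [Finset.mem_range] at hj
      congr 1
      unfold dd
      omega
    rw [Finset.sum_congr rfl h1]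
    have h2 : ∀ j ∈ range n, F (n - j) = (fun i => F (i + 1)) (n - 1 - j) := by
      intro j hj
      rw [Finset.mem_range] at hj
      simp only
      congr 1
      omega
    rw [Finset.sum_congr rfl h2, Finset.sum_range_reflect (fun i => F (i + 1)) n]
    rw [← Finset.Ico_add_one_right_eq_Icc, Finset.sum_Ico_eq_sum_range]
    apply Finset.sum_congr (by simp)
    intro j _
    congr 1
    omega
  intro n
  induction n with
  | zero => simp
  | succ n ihn =>
    rw [Finset.sum_range_succ]
    have hinner : ∀ i ∈ range n, ∑ j ∈ range (n+1), F (dd i j)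
        = (∑ j ∈ range n, F (dd i j)) + F (dd i n) := by
      intro i _
      rw [Finset.sum_range_succ]
    rw [Finset.sum_congr rfl hinner, Finset.sum_add_distrib, ihn]
    have hcol : ∑ i ∈ range n, F (dd i n) = ∑ d ∈ Icc 1 n, F d := by
      rw [← hrow n]
      apply Finset.sum_congr rfl
      intro i _
      rw [dd_symm]
    rw [hcol, Finset.sum_range_succ, hrow n]
    have hdd : dd n n = 0 := by unfold dd; omega
    rw [hdd, hF0, add_zero]
    -- now pure arithmetic on the Icc sums
    rcases Nat.eq_zero_or_pos n with rfl | hn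
    · simp
    · have hT : ∑ d ∈ Icc 1 ((n+1)-1), (((n+1) - d : ℕ) : ℝ) * F d
          = ∑ d ∈ Icc 1 (n-1), ((n - d : ℕ) : ℝ) * F d + ∑ d ∈ Icc 1 n, F d := by
        have e1 : ∀ d ∈ Icc 1 n, (((n+1) - d : ℕ) : ℝ) * F d
            = ((n - d : ℕ) : ℝ) * F d + F d := by
          intro d hd
          rw [Finset.mem_Icc] at hd
          have : ((n+1) - d : ℕ) = (n - d) + 1 := by omega
          rw [this]
          push_cast
          ring
        rw [show (n+1)-1 = n from rfl, Finset.sum_congr rfl e1, Finset.sum_add_distrib]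
        congr 1
        obtain ⟨m, rfl⟩ : ∃ m, n = m + 1 := ⟨n - 1, by omega⟩
        rw [Finset.sum_Icc_succ_top (by omega : 1 ≤ m + 1)]
        simp only [Nat.add_sub_cancel, Nat.sub_self, Nat.cast_zero, zero_mul, add_zero]
      rw [hT]
      ring

lemma harary_pow_path_le (k n : ℕ) (hk : 0 < k) :
    hararyIdx (graphPow (SimpleGraph.pathGraph n) k) ≤ A k n := by
  set f : Fin n → Fin n → ℝ := fun u v => 1/(cdiv k (dd (u:ℕ) (v:ℕ))) with hfdef
  have hfsymm : ∀ a b, f a b = f b a := by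
    intro a b
    simp only [hfdef, dd_symm]
  have hstep1 : hararyIdx (graphPow (SimpleGraph.pathGraph n) k) ≤
      ∑ p ∈ univ.filter (fun p : Sym2 (Fin n) => ¬ p.IsDiag), Sym2.lift ⟨f, hfsymm⟩ p := by
    unfold hararyIdx
    apply Finset.sum_le_sum
    intro p hp
    rw [Finset.mem_filter] at hp
    induction p with
    | _ a b =>
      have hab : a ≠ b := by
        have := hp.2
        rwa [Sym2.mk_isDiag_iff] at this
      simp only [pairDist, Sym2.lift_mk]
      exact pow_pair_bound hk hab
  have hstep2 : ∑ p ∈ univ.filter (fun p : Sym2 (Fin n) => ¬ p.IsDiag), Sym2.lift ⟨f, hfsymm⟩ p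
      = (∑ u : Fin n, ∑ v : Fin n, f u v) / 2 := by
    rw [sym2_sum f hfsymm]
    congr 1
    apply Finset.sum_congr rfl
    intro u _
    apply Finset.sum_congr rfl
    intro v _
    by_cases h : u = v
    · subst h
      simp only [if_pos rfl, hfdef]
      rw [show dd (u:ℕ) (u:ℕ) = 0 by unfold dd; omega, cdiv_zero]
      simp
    · rw [if_neg h]
  have hstep3 : ∑ u : Fin n, ∑ v : Fin n, f u v
      = 2 * ∑ d ∈ Icc 1 (n-1), ((n - d : ℕ) : ℝ) * (1/(cdiv k d)) := by
    have hF0 : (1:ℝ)/(cdiv k 0) = 0 := by rw [cdiv_zero]; simp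
    have := count_sum (fun d => (1:ℝ)/(cdiv k d)) hF0 n
    rw [← this]
    have e1 : ∀ u : Fin n, ∑ v : Fin n, f u v
        = ∑ j ∈ range n, (1:ℝ)/(cdiv k (dd (u:ℕ) j)) :=
      fun u => Fin.sum_univ_eq_sum_range (fun j => (1:ℝ)/(cdiv k (dd (u:ℕ) j))) n
    rw [Finset.sum_congr rfl (fun u _ => e1 u)]
    exact Fin.sum_univ_eq_sum_range
      (fun i => ∑ j ∈ range n, (1:ℝ)/(cdiv k (dd i j))) n
  have hstep4 : ∑ d ∈ Icc 1 (n-1), ((n - d : ℕ) : ℝ) * (1/(cdiv k d)) = A k n := by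
    unfold A
    apply Finset.sum_congr rfl
    intro d hd
    rw [Finset.mem_Icc] at hd
    rw [Nat.cast_sub (by omega : d ≤ n)]
    ring
  calc hararyIdx (graphPow (SimpleGraph.pathGraph n) k)
      ≤ ∑ p ∈ univ.filter (fun p : Sym2 (Fin n) => ¬ p.IsDiag), Sym2.lift ⟨f, hfsymm⟩ p :=
        hstep1
    _ = (∑ u : Fin n, ∑ v : Fin n, f u v) / 2 := hstep2
    _ = (2 * ∑ d ∈ Icc 1 (n-1), ((n - d : ℕ) : ℝ) * (1/(cdiv k d))) / 2 := by rw [hstep3]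
    _ = ∑ d ∈ Icc 1 (n-1), ((n - d : ℕ) : ℝ) * (1/(cdiv k d)) := by ring
    _ = A k n := hstep4


end HP

/-- Among maximal `k`-degenerate graphs with `n` vertices, the `k`-th power of the
path `P_n` minimises the Harary index. -/
theorem hararyIdx_pathPower_le_of_maxKDegenerate {V : Type*} [Fintype V] [DecidableEq V]
    (k n : ℕ) (hk : 0 < k) (hkn : k ≤ n - 1)
    (G : SimpleGraph V) (hcard : Fintype.card V = n) (hG : MaxKDegenerate G k)
 :
    hararyIdx (graphPow (SimpleGraph.pathGraph n) k) ≤ hararyIdx G := by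
  have hkn' : k + 1 ≤ n := by omega
  calc hararyIdx (graphPow (SimpleGraph.pathGraph n) k) ≤ HP.A k n :=
        HP.harary_pow_path_le k n hk
    _ ≤ hararyIdx G := HP.main k hk n V G hkn' hcard hG
end
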